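/- arXiv:1110.1525 — 12 statements merged into one kernel-verified Lean document; each statement's English description precedes it below -/
import Mathlib

section
/- Let V₁, V₂, V₃ be finite-dimensional vector spaces over a field, and let R ⊆ V₂ × V₁ and R' ⊆ V₃ × V₂ be linear relations (subspaces). Define ann♮(R) ⊆ V₁* × V₂* as the set of pairs (μ₁, μ₂) such that ⟨μ₁, v₁⟩ = ⟨μ₂, v₂⟩ whenever (v₂, v₁) ∈ R, viewed as a relation V₁* ⇢ V₂*. Then ann♮(R' ∘ R) = ann♮(R') ∘ ann♮(R), where ∘ denotes composition of relations. -/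
open Module

variable {K : Type*} [Field K]

/-- Composition of linear relations: a relation `V₁ ⇢ V₂` is a subspace of `V₂ × V₁`. -/
def LinRel.comp {V₁ V₂ V₃ : Type*}
    [AddCommGroup V₁] [Module K V₁] [AddCommGroup V₂] [Module K V₂]
    [AddCommGroup V₃] [Module K V₃]
    (R' : Submodule K (V₃ × V₂)) (R : Submodule K (V₂ × V₁)) :
    Submodule K (V₃ × V₁) where
  carrier := {p | ∃ b, (p.1, b) ∈ R' ∧ (b, p.2) ∈ R}
  add_mem' := by
    rintro x y ⟨b, hb', hb⟩ ⟨c, hc', hc⟩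
    exact ⟨b + c, R'.add_mem hb' hc', R.add_mem hb hc⟩
  zero_mem' := ⟨0, R'.zero_mem, R.zero_mem⟩
  smul_mem' := by
    rintro a x ⟨b, hb', hb⟩
    exact ⟨a • b, R'.smul_mem a hb', R.smul_mem a hb⟩

/-- The relation `ann♮(R) : V₁* ⇢ V₂*` of a linear relation `R : V₁ ⇢ V₂`:
pairs `(μ₂, μ₁)` such that `⟨μ₁, v₁⟩ = ⟨μ₂, v₂⟩` for all `(v₂, v₁) ∈ R`. -/
def LinRel.ann {V₁ V₂ : Type*}
    [AddCommGroup V₁] [Module K V₁] [AddCommGroup V₂] [Module K V₂]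
    (R : Submodule K (V₂ × V₁)) :
    Submodule K (Module.Dual K V₂ × Module.Dual K V₁) where
  carrier := {μ | ∀ v ∈ R, μ.2 v.2 = μ.1 v.1}
  add_mem' := by
    intro x y hx hy v hv
    have h1 := hx v hv
    have h2 := hy v hv
    simp only [Prod.fst_add, Prod.snd_add, LinearMap.add_apply]
    rw [h1, h2]
  zero_mem' := by intro v hv; simp
  smul_mem' := by
    intro a x hx v hv
    have h1 := hx v hv
    simp only [Prod.smul_fst, Prod.smul_snd, LinearMap.smul_apply]
    rw [h1]

/-! A witness `μ₂` for `(μ₃, μ₁) ∈ ann♮(R') ∘ ann♮(R)` is prescribed on `V₂` by `v₂ ↦ μ₁ v₁` for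
`(v₂, v₁) ∈ R` and `v₂ ↦ μ₃ v₃` for `(v₃, v₂) ∈ R'`. These prescriptions together span a subspace
of `V₂ × K` that is a graph precisely because `(μ₃, μ₁)` annihilates `R' ∘ R`, and over a field
a linear map defined on a subspace extends to the whole space. -/

theorem Submodule.exists_le_linearMap_graph {𝕜 E F : Type*} [DivisionRing 𝕜]
    [AddCommGroup E] [Module 𝕜 E] [AddCommGroup F] [Module 𝕜 F]
    (g : Submodule 𝕜 (E × F)) (hg : ∀ x ∈ g, x.1 = 0 → x.2 = 0) :
    ∃ f : E →ₗ[𝕜] F, g ≤ f.graph := by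
  obtain ⟨f, hf⟩ := LinearMap.exists_extend g.toLinearPMap.toFun
  refine ⟨f, fun x hx => ?_⟩
  rw [← g.toLinearPMap_graph_eq hg, LinearPMap.mem_graph_iff] at hx
  obtain ⟨y, hy₁, hy₂⟩ := hx
  rw [LinearMap.mem_graph_iff, ← hy₁, ← hy₂]
  exact (LinearMap.congr_fun hf y).symm

namespace LinRel

variable {V₁ V₂ V₃ : Type*} [AddCommGroup V₁] [Module K V₁] [AddCommGroup V₂] [Module K V₂]
  [AddCommGroup V₃] [Module K V₃]

theorem comp_ann_le_ann_comp (R : Submodule K (V₂ × V₁)) (R' : Submodule K (V₃ × V₂)) :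
    comp (ann R') (ann R) ≤ ann (comp R' R) := by
  rintro ⟨μ₃, μ₁⟩ ⟨μ₂, hμ', hμ⟩ ⟨v₃, v₁⟩ ⟨v₂, hv', hv⟩
  exact (hμ (v₂, v₁) hv).trans (hμ' (v₃, v₂) hv')

theorem ann_comp_le_comp_ann (R : Submodule K (V₂ × V₁)) (R' : Submodule K (V₃ × V₂)) :
    ann (comp R' R) ≤ comp (ann R') (ann R) := by
  rintro ⟨μ₃, μ₁⟩ hμ
  let g : Submodule K (V₂ × K) :=
    R.map (LinearMap.prodMap LinearMap.id μ₁) ⊔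
      R'.map ((LinearMap.snd K V₃ V₂).prod (μ₃ ∘ₗ LinearMap.fst K V₃ V₂))
  have hg : ∀ x ∈ g, x.1 = 0 → x.2 = 0 := by
    intro x hx hx0
    obtain ⟨_, ⟨⟨a₂, v₁⟩, hR, rfl⟩, _, ⟨⟨v₃, b₂⟩, hR', rfl⟩, rfl⟩ := Submodule.mem_sup.1 hx
    simp only [Prod.fst_add, Prod.snd_add, LinearMap.prodMap_apply, LinearMap.prod_apply,
      LinearMap.id_apply, LinearMap.coe_comp, Function.prod, Function.comp_apply,
      LinearMap.fst_apply, LinearMap.snd_apply] at hx0 ⊢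
    have hR'neg : (-v₃, a₂) ∈ R' := by
      simpa [neg_eq_of_add_eq_zero_left hx0] using R'.neg_mem hR'
    have hpair : μ₁ v₁ = μ₃ (-v₃) := hμ (-v₃, v₁) ⟨a₂, hR'neg, hR⟩
    rw [hpair, map_neg, neg_add_cancel]
  obtain ⟨μ₂, hμ₂⟩ := g.exists_le_linearMap_graph hg
  refine ⟨μ₂, fun v hv => ?_, fun v hv => ?_⟩
  · exact ((LinearMap.mem_graph_iff _ _).1 (hμ₂ (Submodule.mem_sup_right ⟨v, hv, rfl⟩))).symm
  · exact (LinearMap.mem_graph_iff _ _).1 (hμ₂ (Submodule.mem_sup_left ⟨v, hv, rfl⟩))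

end LinRel

theorem ann_comp_eq_comp_ann_general {V₁ V₂ V₃ : Type*}
    [AddCommGroup V₁] [Module K V₁]
    [AddCommGroup V₂] [Module K V₂]
    [AddCommGroup V₃] [Module K V₃]
    (R : Submodule K (V₂ × V₁)) (R' : Submodule K (V₃ × V₂)) :
    LinRel.ann (LinRel.comp R' R) = LinRel.comp (LinRel.ann R') (LinRel.ann R) :=
  le_antisymm (LinRel.ann_comp_le_comp_ann R R') (LinRel.comp_ann_le_ann_comp R R')

/-- The annihilator relation of a composition is the composition of the
annihilator relations: `ann♮(R' ∘ R) = ann♮(R') ∘ ann♮(R)`. -/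
theorem ann_comp_eq_comp_ann {V₁ V₂ V₃ : Type*}
    [AddCommGroup V₁] [Module K V₁] [FiniteDimensional K V₁]
    [AddCommGroup V₂] [Module K V₂] [FiniteDimensional K V₂]
    [AddCommGroup V₃] [Module K V₃] [FiniteDimensional K V₃]
    (R : Submodule K (V₂ × V₁)) (R' : Submodule K (V₃ × V₂)) :
    LinRel.ann (LinRel.comp R' R) = LinRel.comp (LinRel.ann R') (LinRel.ann R) :=
  ann_comp_eq_comp_ann_general R R'
end

section
/- Let W₁, W₂, W₃ be finite-dimensional vector spaces each equipped with a non-degenerate symmetric bilinear form. If L ⊆ W₂ × W₁ is a Lagrangian subspace with respect to the form ⟨·,·⟩_{W₂} ⊕ (−⟨·,·⟩_{W₁}), and L' ⊆ W₃ × W₂ is Lagrangian with respect to ⟨·,·⟩_{W₃} ⊕ (−⟨·,·⟩_{W₂}), then the composed relation L' ∘ L ⊆ W₃ × W₁ is Lagrangian with respect to ⟨·,·⟩_{W₃} ⊕ (−⟨·,·⟩_{W₁}). -/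
/-! In `(W₃ × W₂) × (W₂ × W₁)` with the sum form, `M = L' × L` is Lagrangian and `L' ∘ L` is the
image, under forgetting the middle components, of `M ∩ D`, where `D` is the subspace on which the
two middle components agree. A vector `x = (x₃, x₁)` orthogonal to `L' ∘ L` lifts to
`((x₃, 0), (0, x₁))`, which is orthogonal to `M ∩ D`; non-degeneracy gives
`(M ∩ D)^⊥ = M^⊥ + D^⊥ = M + D^⊥`, and `D^⊥ = {((0, b), (b, 0))}`, so the lift differs from an
element `((x₃, -b), (-b, x₁))` of `M` by such a vector, i.e. `x ∈ L' ∘ L`. -/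

open Module

variable {K : Type*} [Field K]

/-- The bilinear form `⟨·,·⟩_{W₂} ⊕ (−⟨·,·⟩_{W₁})` on `W₂ × W₁`. -/
def prodNegForm {W₂ W₁ : Type*} [AddCommGroup W₂] [Module K W₂]
    [AddCommGroup W₁] [Module K W₁]
    (B₂ : LinearMap.BilinForm K W₂) (B₁ : LinearMap.BilinForm K W₁) :
    LinearMap.BilinForm K (W₂ × W₁) :=
  LinearMap.mk₂ K (fun x y => B₂ x.1 y.1 - B₁ x.2 y.2)
    (fun x x' y => by
      simp only [Prod.fst_add, Prod.snd_add, map_add, LinearMap.add_apply]; ring)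
    (fun a x y => by
      simp only [Prod.smul_fst, Prod.smul_snd, map_smul, LinearMap.smul_apply,
        smul_eq_mul]; ring)
    (fun x y y' => by
      simp only [Prod.fst_add, Prod.snd_add, map_add, LinearMap.add_apply]; ring)
    (fun a x y => by
      simp only [Prod.smul_fst, Prod.smul_snd, map_smul, LinearMap.smul_apply,
        smul_eq_mul]; ring)

open LinearMap (BilinForm)

namespace LinearMap.BilinForm

variable {V W : Type*} [AddCommGroup V] [Module K V] [AddCommGroup W] [Module K W]

def prod (B : BilinForm K V) (C : BilinForm K W) : BilinForm K (V × W) :=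
  B.compl₁₂ (fst K V W) (fst K V W) + C.compl₁₂ (snd K V W) (snd K V W)

@[simp] lemma prod_apply (B : BilinForm K V) (C : BilinForm K W) (x y : V × W) :
    B.prod C x y = B x.1 y.1 + C x.2 y.2 := rfl

lemma isSymm_prod {B : BilinForm K V} {C : BilinForm K W} (hB : B.IsSymm) (hC : C.IsSymm) :
    (B.prod C).IsSymm :=
  ⟨fun x y => by simp only [prod_apply, hB.eq x.1, hC.eq x.2]⟩

lemma IsSymm.nondegenerate_of_separatingLeft {B : BilinForm K V} (hB : B.IsSymm)
    (h : LinearMap.SeparatingLeft B) : B.Nondegenerate :=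
  (LinearMap.IsRefl.nondegenerate_iff_separatingLeft hB.isRefl).2 h

lemma nondegenerate_prod {B : BilinForm K V} {C : BilinForm K W} (hB : B.Nondegenerate)
    (hC : C.Nondegenerate) : (B.prod C).Nondegenerate :=
  ⟨fun x hx => Prod.ext (hB.1 _ fun y => by simpa using hx (y, 0))
      (hC.1 _ fun y => by simpa using hx (0, y)),
    fun x hx => Prod.ext (hB.2 _ fun y => by simpa using hx (y, 0))
      (hC.2 _ fun y => by simpa using hx (0, y))⟩

lemma nondegenerate_neg {B : BilinForm K V} (hB : B.Nondegenerate) : (-B).Nondegenerate :=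
  ⟨fun x hx => hB.1 x fun y => by simpa using hx y,
    fun y hy => hB.2 y fun x => by simpa using hy x⟩

lemma orthogonal_prod (B : BilinForm K V) (C : BilinForm K W) (S : Submodule K V)
    (T : Submodule K W) :
    (B.prod C).orthogonal (S.prod T) = (B.orthogonal S).prod (C.orthogonal T) := by
  ext x
  simp only [mem_orthogonal_iff, Submodule.mem_prod, prod_apply, Prod.forall]
  refine ⟨fun h => ⟨fun s hs => by simpa using h s 0 ⟨hs, T.zero_mem⟩,
    fun t ht => by simpa using h 0 t ⟨S.zero_mem, ht⟩⟩, ?_⟩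
  rintro ⟨hS, hT⟩ s t ⟨hs, ht⟩
  rw [hS s hs, hT t ht, add_zero]

lemma orthogonal_sup (B : BilinForm K V) (S T : Submodule K V) :
    B.orthogonal (S ⊔ T) = B.orthogonal S ⊓ B.orthogonal T := by
  ext x
  simp only [Submodule.mem_inf, mem_orthogonal_iff]
  refine ⟨fun h => ⟨fun s hs => h s (Submodule.mem_sup_left hs),
    fun t ht => h t (Submodule.mem_sup_right ht)⟩, ?_⟩
  rintro ⟨hS, hT⟩ _ hn
  obtain ⟨s, hs, t, ht, rfl⟩ := Submodule.mem_sup.mp hn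
  rw [map_add, LinearMap.add_apply, hS s hs, hT t ht, add_zero]

lemma orthogonal_inf [FiniteDimensional K V] {B : BilinForm K V} (hB : B.Nondegenerate)
    (hB₀ : B.IsRefl) (S T : Submodule K V) :
    B.orthogonal (S ⊓ T) = B.orthogonal S ⊔ B.orthogonal T := by
  rw [← orthogonal_orthogonal hB hB₀ (_ ⊔ _), orthogonal_sup,
    orthogonal_orthogonal hB hB₀, orthogonal_orthogonal hB hB₀]

end LinearMap.BilinForm

section prodNegForm

variable {V W : Type*} [AddCommGroup V] [Module K V] [AddCommGroup W] [Module K W]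

@[simp] lemma prodNegForm_apply (B : BilinForm K V) (C : BilinForm K W) (x y : V × W) :
    prodNegForm B C x y = B x.1 y.1 - C x.2 y.2 := rfl

lemma prodNegForm_eq_prod (B : BilinForm K V) (C : BilinForm K W) :
    prodNegForm B C = B.prod (-C) :=
  LinearMap.ext₂ fun _ _ => sub_eq_add_neg _ _

end prodNegForm

namespace LinRel

open LinearMap.BilinForm

variable {V₁ V₂ V₃ : Type*} [AddCommGroup V₁] [Module K V₁] [AddCommGroup V₂] [Module K V₂]
  [AddCommGroup V₃] [Module K V₃]

variable (K V₁ V₂ V₃) in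
def composable : Submodule K ((V₃ × V₂) × (V₂ × V₁)) :=
  ((LinearMap.snd K V₃ V₂) ∘ₗ LinearMap.fst K _ _).eqLocus
    ((LinearMap.fst K V₂ V₁) ∘ₗ LinearMap.snd K _ _)

@[simp] lemma mem_composable {x : (V₃ × V₂) × (V₂ × V₁)} :
    x ∈ composable K V₁ V₂ V₃ ↔ x.1.2 = x.2.1 := LinearMap.mem_eqLocus

variable {B₁ : BilinForm K V₁} {B₂ : BilinForm K V₂} {B₃ : BilinForm K V₃}
  {R : Submodule K (V₂ × V₁)} {R' : Submodule K (V₃ × V₂)}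

lemma mem_comp_of_mem_prod_inf_composable {x : (V₃ × V₂) × (V₂ × V₁)}
    (hx : x ∈ R'.prod R ⊓ composable K V₁ V₂ V₃) : (x.1.1, x.2.2) ∈ comp R' R :=
  ⟨x.1.2, hx.1.1, mem_composable.mp hx.2 ▸ hx.1.2⟩

lemma comp_le_orthogonal_comp (hR : R ≤ (prodNegForm B₂ B₁).orthogonal R)
    (hR' : R' ≤ (prodNegForm B₃ B₂).orthogonal R') :
    comp R' R ≤ (prodNegForm B₃ B₁).orthogonal (comp R' R) := by
  rintro x ⟨b, hb', hb⟩ n ⟨c, hc', hc⟩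
  have e' := hR' hb' (n.1, c) hc'
  have e := hR hb (c, n.2) hc
  simp only [prodNegForm_apply] at e' e ⊢
  linear_combination e' + e

lemma mk_mem_orthogonal_prod_inf_composable {x : V₃ × V₁}
    (hx : x ∈ (prodNegForm B₃ B₁).orthogonal (comp R' R)) :
    ((x.1, 0), (0, x.2)) ∈ ((prodNegForm B₃ B₂).prod (prodNegForm B₂ B₁)).orthogonal
      (R'.prod R ⊓ composable K V₁ V₂ V₃) := by
  intro n hn
  simpa [sub_eq_add_neg] using hx _ (mem_comp_of_mem_prod_inf_composable hn)

lemma eq_of_mem_orthogonal_composable (hB₁ : B₁.Nondegenerate) (hB₂ : B₂.Nondegenerate)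
    (hB₃ : B₃.Nondegenerate) {z : (V₃ × V₂) × (V₂ × V₁)}
    (hz : z ∈ ((prodNegForm B₃ B₂).prod (prodNegForm B₂ B₁)).orthogonal
      (composable K V₁ V₂ V₃)) :
    z.1.1 = 0 ∧ z.2.2 = 0 ∧ z.1.2 = z.2.1 := by
  refine ⟨hB₃.2 _ fun y => by simpa using hz ((y, 0), (0, 0)) (by simp),
    hB₁.2 _ fun y => by simpa using hz ((0, 0), (0, y)) (by simp),
    (sub_eq_zero.mp (hB₂.2 _ fun y => ?_)).symm⟩
  have h := hz ((0, y), (y, 0)) (by simp)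
  simp only [prod_apply, prodNegForm_apply, map_zero, LinearMap.zero_apply] at h
  rw [map_sub]
  linear_combination h

lemma orthogonal_comp_le_comp [FiniteDimensional K V₁] [FiniteDimensional K V₂]
    [FiniteDimensional K V₃] (hB₁ : B₁.IsSymm) (hB₂ : B₂.IsSymm) (hB₃ : B₃.IsSymm)
    (hB₁' : B₁.Nondegenerate) (hB₂' : B₂.Nondegenerate) (hB₃' : B₃.Nondegenerate)
    (hR : (prodNegForm B₂ B₁).orthogonal R = R) (hR' : (prodNegForm B₃ B₂).orthogonal R' = R') :
    (prodNegForm B₃ B₁).orthogonal (comp R' R) ≤ comp R' R := by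
  intro x hx
  have hQ : ((prodNegForm B₃ B₂).prod (prodNegForm B₂ B₁)).IsSymm := by
    simp only [prodNegForm_eq_prod]
    exact isSymm_prod (isSymm_prod hB₃ (isSymm_neg.2 hB₂)) (isSymm_prod hB₂ (isSymm_neg.2 hB₁))
  have hQ' : ((prodNegForm B₃ B₂).prod (prodNegForm B₂ B₁)).Nondegenerate := by
    simp only [prodNegForm_eq_prod]
    exact nondegenerate_prod (nondegenerate_prod hB₃' (nondegenerate_neg hB₂'))
      (nondegenerate_prod hB₂' (nondegenerate_neg hB₁'))
  have hlift := mk_mem_orthogonal_prod_inf_composable (B₂ := B₂) hx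
  rw [orthogonal_inf hQ' hQ.isRefl, orthogonal_prod, hR, hR'] at hlift
  obtain ⟨m, hm, z, hz, hmz⟩ := Submodule.mem_sup.mp hlift
  obtain ⟨⟨z₃, b⟩, b', z₁⟩ := z
  obtain ⟨rfl, rfl, rfl : b = b'⟩ := eq_of_mem_orthogonal_composable hB₁' hB₂' hB₃' hz
  obtain rfl := eq_sub_of_add_eq hmz
  exact ⟨-b, by simpa using hm.1, by simpa using hm.2⟩

end LinRel

/-- The composition of Lagrangian relations between finite-dimensional vector spaces
with non-degenerate symmetric bilinear forms is again a Lagrangian relation. -/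
theorem lagrangian_comp {W₁ W₂ W₃ : Type*}
    [AddCommGroup W₁] [Module K W₁] [FiniteDimensional K W₁]
    [AddCommGroup W₂] [Module K W₂] [FiniteDimensional K W₂]
    [AddCommGroup W₃] [Module K W₃] [FiniteDimensional K W₃]
    (B₁ : LinearMap.BilinForm K W₁) (B₂ : LinearMap.BilinForm K W₂)
    (B₃ : LinearMap.BilinForm K W₃)
    (h₁symm : ∀ x y, B₁ x y = B₁ y x) (h₂symm : ∀ x y, B₂ x y = B₂ y x)
    (h₃symm : ∀ x y, B₃ x y = B₃ y x)
    (h₁nd : ∀ x, (∀ y, B₁ x y = 0) → x = 0)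
    (h₂nd : ∀ x, (∀ y, B₂ x y = 0) → x = 0)
    (h₃nd : ∀ x, (∀ y, B₃ x y = 0) → x = 0)
    (L : Submodule K (W₂ × W₁)) (L' : Submodule K (W₃ × W₂))
    (hL : L = (prodNegForm B₂ B₁).orthogonal L)
    (hL' : L' = (prodNegForm B₃ B₂).orthogonal L') :
    LinRel.comp L' L = (prodNegForm B₃ B₁).orthogonal (LinRel.comp L' L) := by
  have hB₁ : B₁.IsSymm := ⟨h₁symm⟩
  have hB₂ : B₂.IsSymm := ⟨h₂symm⟩
  have hB₃ : B₃.IsSymm := ⟨h₃symm⟩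
  exact le_antisymm (LinRel.comp_le_orthogonal_comp hL.le hL'.le)
    (LinRel.orthogonal_comp_le_comp hB₁ hB₂ hB₃ (hB₁.nondegenerate_of_separatingLeft h₁nd)
      (hB₂.nondegenerate_of_separatingLeft h₂nd) (hB₃.nondegenerate_of_separatingLeft h₃nd)
      hL.symm hL'.symm)
end

section
/- Let 𝔡 be a finite-dimensional Lie algebra and β ∈ S²𝔡 an ad-invariant symmetric 2-tensor. Let 𝔡*_β denote 𝔡* equipped with the bracket defined by ⟨[μ₁, μ₂], ξ⟩ = ⟨μ₂, [ξ, β^♯(μ₁)]⟩ for ξ ∈ 𝔡. Then this bracket is a Lie bracket on 𝔡*, i.e. it is bilinear, antisymmetric, and satisfies the Jacobi identity. -/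
/-!
Writing `ad*` for the coadjoint action `⁅ξ, μ⁆ = -μ ∘ ad ξ` of `𝔡` on `𝔡*`, the bracket is
`[μ₁, μ₂] = ad*_{β^♯ μ₁} μ₂`, and invariance of `β` says that `β^♯ : 𝔡* → 𝔡` is a morphism of
`𝔡`-modules. For any such equivariant `f : M → 𝔡`, the bracket `⁅f m₁, m₂⁆` on `M` satisfies the
Leibniz form of the Jacobi identity, because `f ⁅f m₁, m₂⁆ = ⁅f m₁, f m₂⁆` and `M` is a
`𝔡`-module. Antisymmetry is where the symmetry of `β` enters.
-/

open Module LieAlgebra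

section Leibniz

variable {R L M : Type*} [CommRing R] [LieRing L] [LieAlgebra R L]
  [AddCommGroup M] [Module R M] [LieRingModule L M]

theorem LieModuleHom.leibniz_lie_apply (f : M →ₗ⁅R, L⁆ L) (m₁ m₂ m₃ : M) :
    ⁅f m₁, ⁅f m₂, m₃⁆⁆ = ⁅f ⁅f m₁, m₂⁆, m₃⁆ + ⁅f m₂, ⁅f m₁, m₃⁆⁆ := by
  rw [f.map_lie, leibniz_lie]

end Leibniz

section Dual

variable {R L : Type*} [CommRing R] [LieRing L] [LieAlgebra R L]

theorem Module.Dual.lie_eq_neg_comp_ad (ξ : L) (μ : Dual R L) : ⁅ξ, μ⁆ = -(μ ∘ₗ ad R L ξ) := by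
  ext; simp

def Module.Dual.sharpLieModuleHom (Bs : Dual R L →ₗ[R] L)
    (hinv : ∀ (ξ : L) (μ : Dual R L), Bs (μ ∘ₗ ad R L ξ) = -⁅ξ, Bs μ⁆) :
    Dual R L →ₗ⁅R, L⁆ L where
  toLinearMap := Bs
  map_lie' {ξ μ} := by simp [Module.Dual.lie_eq_neg_comp_ad, hinv]

theorem Module.Dual.lie_map_skew_of_symm (f : Dual R L →ₗ⁅R, L⁆ L)
    (hsymm : ∀ μ ν : Dual R L, μ (f ν) = ν (f μ)) (μ ν : Dual R L) :
    ⁅f μ, ν⁆ = -⁅f ν, μ⁆ := by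
  ext ξ
  calc ⁅f μ, ν⁆ ξ = ν (f ⁅ξ, μ⁆) := by
        rw [f.map_lie, Module.Dual.lie_apply, ← lie_skew, map_neg, neg_neg]
    _ = ⁅ξ, μ⁆ (f ν) := hsymm _ _
    _ = -⁅f ν, μ⁆ ξ := by rw [Module.Dual.lie_apply, Module.Dual.lie_apply, ← lie_skew, map_neg]

end Dual

theorem dual_bracket_is_lie_bracket_general {K D : Type*} [Field K]
    [LieRing D] [LieAlgebra K D]
    (Bs : Module.Dual K D →ₗ[K] D)
    (hsymm : ∀ μ ν : Module.Dual K D, μ (Bs ν) = ν (Bs μ))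
    (hinv : ∀ (ξ : D) (μ : Module.Dual K D),
      Bs (μ ∘ₗ LieAlgebra.ad K D ξ) = -⁅ξ, Bs μ⁆)
    (br : Module.Dual K D → Module.Dual K D → Module.Dual K D)
    (hbr : ∀ (μ₁ μ₂ : Module.Dual K D) (ξ : D), br μ₁ μ₂ ξ = μ₂ ⁅ξ, Bs μ₁⁆) :
    (∀ (a : K) (μ₁ μ₁' μ₂ : Module.Dual K D),
      br (a • μ₁ + μ₁') μ₂ = a • br μ₁ μ₂ + br μ₁' μ₂) ∧
    (∀ (a : K) (μ₁ μ₂ μ₂' : Module.Dual K D),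
      br μ₁ (a • μ₂ + μ₂') = a • br μ₁ μ₂ + br μ₁ μ₂') ∧
    (∀ μ₁ μ₂ : Module.Dual K D, br μ₁ μ₂ = -br μ₂ μ₁) ∧
    (∀ μ₁ μ₂ μ₃ : Module.Dual K D,
      br μ₁ (br μ₂ μ₃) = br (br μ₁ μ₂) μ₃ + br μ₂ (br μ₁ μ₃)) := by
  set f := Module.Dual.sharpLieModuleHom Bs hinv
  have hbr_eq : ∀ μ₁ μ₂, br μ₁ μ₂ = ⁅f μ₁, μ₂⁆ := by
    intro μ₁ μ₂
    ext ξ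
    rw [hbr, Module.Dual.lie_apply, ← lie_skew, map_neg]
    rfl
  simp only [hbr_eq]
  refine ⟨fun a μ₁ μ₁' μ₂ ↦ ?_, fun a μ₁ μ₂ μ₂' ↦ ?_, ?_, f.leibniz_lie_apply⟩
  · rw [map_add, map_smul, add_lie, smul_lie]
  · rw [lie_add, lie_smul a (f μ₁) μ₂]
  · exact Module.Dual.lie_map_skew_of_symm f hsymm

/-- Let `𝔡` be a finite-dimensional Lie algebra and `β ∈ S²𝔡` an invariant symmetric
2-tensor, represented by its sharp map `Bs : 𝔡* → 𝔡` (symmetry: `μ(Bs ν) = ν(Bs μ)`;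
invariance: `Bs(μ ∘ ad ξ) = −⁅ξ, Bs μ⁆`, i.e. `β^♯ ∘ ad*_ξ = ad_ξ ∘ β^♯`).
The bracket on `𝔡*` determined by `⟨[μ₁, μ₂], ξ⟩ = ⟨μ₂, [ξ, β^♯(μ₁)]⟩` is a
Lie bracket: bilinear, antisymmetric, and satisfying the Jacobi identity. -/
theorem dual_bracket_is_lie_bracket {K D : Type*} [Field K]
    [LieRing D] [LieAlgebra K D] [FiniteDimensional K D]
    (Bs : Module.Dual K D →ₗ[K] D)
    (hsymm : ∀ μ ν : Module.Dual K D, μ (Bs ν) = ν (Bs μ))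
    (hinv : ∀ (ξ : D) (μ : Module.Dual K D),
      Bs (μ ∘ₗ LieAlgebra.ad K D ξ) = -⁅ξ, Bs μ⁆)
    (br : Module.Dual K D → Module.Dual K D → Module.Dual K D)
    (hbr : ∀ (μ₁ μ₂ : Module.Dual K D) (ξ : D), br μ₁ μ₂ ξ = μ₂ ⁅ξ, Bs μ₁⁆) :
    (∀ (a : K) (μ₁ μ₁' μ₂ : Module.Dual K D),
      br (a • μ₁ + μ₁') μ₂ = a • br μ₁ μ₂ + br μ₁' μ₂) ∧
    (∀ (a : K) (μ₁ μ₂ μ₂' : Module.Dual K D),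
      br μ₁ (a • μ₂ + μ₂') = a • br μ₁ μ₂ + br μ₁ μ₂') ∧
    (∀ μ₁ μ₂ : Module.Dual K D, br μ₁ μ₂ = -br μ₂ μ₁) ∧
    (∀ μ₁ μ₂ μ₃ : Module.Dual K D,
      br μ₁ (br μ₂ μ₃) = br (br μ₁ μ₂) μ₃ + br μ₂ (br μ₁ μ₃)) :=
  dual_bracket_is_lie_bracket_general Bs hsymm hinv br hbr
end

section
/- Let 𝔡 be a finite-dimensional Lie algebra with invariant β ∈ S²𝔡, and let 𝔡*_β be the Lie algebra on 𝔡* with bracket ⟨[μ₁, μ₂], ξ⟩ = ⟨μ₂, [ξ, β^♯(μ₁)]⟩. Then the bilinear form β, viewed as a symmetric bilinear form on 𝔡*_β, is invariant under the bracket of 𝔡*_β: β([μ₁, μ₂], μ₃) + β(μ₂, [μ₁, μ₃]) = 0. -/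
open Module LieAlgebra

section DualBracket

variable {K D : Type*} [CommRing K] [LieRing D] [LieAlgebra K D]
  {Bs : Module.Dual K D →ₗ[K] D} {br : Module.Dual K D → Module.Dual K D → Module.Dual K D}

theorem dualBracket_eq_neg_comp_ad (hbr : ∀ (μ₁ μ₂ : Module.Dual K D) (ξ : D),
      br μ₁ μ₂ ξ = μ₂ ⁅ξ, Bs μ₁⁆) (μ₁ μ : Module.Dual K D) :
    br μ₁ μ = -(μ ∘ₗ LieAlgebra.ad K D (Bs μ₁)) := by
  ext ξ
  simp only [hbr, LinearMap.neg_apply, LinearMap.comp_apply, LieAlgebra.ad_apply,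
    ← lie_skew (Bs μ₁) ξ, map_neg, neg_neg]

theorem sharp_dualBracket (hinv : ∀ (ξ : D) (μ : Module.Dual K D),
      Bs (μ ∘ₗ LieAlgebra.ad K D ξ) = -⁅ξ, Bs μ⁆)
    (hbr : ∀ (μ₁ μ₂ : Module.Dual K D) (ξ : D), br μ₁ μ₂ ξ = μ₂ ⁅ξ, Bs μ₁⁆)
    (μ₁ μ : Module.Dual K D) :
    Bs (br μ₁ μ) = ⁅Bs μ₁, Bs μ⁆ := by
  rw [dualBracket_eq_neg_comp_ad hbr, map_neg, hinv, neg_neg]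

end DualBracket

theorem beta_invariant_under_dual_bracket_general {K D : Type*} [Field K]
    [LieRing D] [LieAlgebra K D]
    (Bs : Module.Dual K D →ₗ[K] D)
    (hinv : ∀ (ξ : D) (μ : Module.Dual K D),
      Bs (μ ∘ₗ LieAlgebra.ad K D ξ) = -⁅ξ, Bs μ⁆)
    (br : Module.Dual K D → Module.Dual K D → Module.Dual K D)
    (hbr : ∀ (μ₁ μ₂ : Module.Dual K D) (ξ : D), br μ₁ μ₂ ξ = μ₂ ⁅ξ, Bs μ₁⁆) :
    ∀ μ₁ μ₂ μ₃ : Module.Dual K D,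
      (br μ₁ μ₂) (Bs μ₃) + μ₂ (Bs (br μ₁ μ₃)) = 0 := by
  intro μ₁ μ₂ μ₃
  rw [hbr, sharp_dualBracket hinv hbr, ← lie_skew (Bs μ₁) (Bs μ₃), map_neg, add_neg_cancel]

/-- Let `𝔡` be a finite-dimensional Lie algebra with invariant symmetric 2-tensor `β`,
represented by its sharp map `Bs : 𝔡* → 𝔡`, and let `br` be the bracket on `𝔡*_β`
with `⟨[μ₁, μ₂], ξ⟩ = ⟨μ₂, [ξ, β^♯(μ₁)]⟩`.  Then `β`, viewed as the bilinear form
`β(μ, ν) = ⟨μ, β^♯(ν)⟩` on `𝔡*_β`, is invariant under this bracket: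
`β([μ₁,μ₂],μ₃) + β(μ₂,[μ₁,μ₃]) = 0`. -/
theorem beta_invariant_under_dual_bracket {K D : Type*} [Field K]
    [LieRing D] [LieAlgebra K D] [FiniteDimensional K D]
    (Bs : Module.Dual K D →ₗ[K] D)
    (hsymm : ∀ μ ν : Module.Dual K D, μ (Bs ν) = ν (Bs μ))
    (hinv : ∀ (ξ : D) (μ : Module.Dual K D),
      Bs (μ ∘ₗ LieAlgebra.ad K D ξ) = -⁅ξ, Bs μ⁆)
    (br : Module.Dual K D → Module.Dual K D → Module.Dual K D)
    (hbr : ∀ (μ₁ μ₂ : Module.Dual K D) (ξ : D), br μ₁ μ₂ ξ = μ₂ ⁅ξ, Bs μ₁⁆) :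
    ∀ μ₁ μ₂ μ₃ : Module.Dual K D,
      (br μ₁ μ₂) (Bs μ₃) + μ₂ (Bs (br μ₁ μ₃)) = 0 :=
  beta_invariant_under_dual_bracket_general Bs hinv br hbr
end

section
/- Let 𝔡 be a finite-dimensional Lie algebra with invariant β ∈ S²𝔡, and form the semidirect product Lie algebra 𝔡̂ = 𝔡 ⋉ 𝔡*_β, where 𝔡 acts on 𝔡*_β by the coadjoint action. Then the symmetric bilinear form β̂ on 𝔡̂ defined by β̂((ξ₁, μ₁), (ξ₂, μ₂)) = β(μ₁, μ₂) + ⟨μ₁, ξ₂⟩ + ⟨μ₂, ξ₁⟩ is non-degenerate and ad-invariant, 𝔡 ⊕ 0 is a Lagrangian Lie subalgebra, and 0 ⊕ 𝔡*_β is a Lie algebra ideal. -/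
/-!
The identities are direct expansions once two consequences of the invariance of `β` are
isolated: `μ ⁅ξ, β^♯ ν⁆ = -ν ⁅ξ, β^♯ μ⁆`, and `β^♯` intertwines the bracket of `𝔡*_β`,
which is `[μ₁, μ₂] = ad*_{β^♯ μ₁} μ₂`, with that of `𝔡`. Non-degeneracy holds because the
dual of a vector space separates points: pairing with `(ξ, 0)` kills `μ`, then pairing with
`(0, ν)` kills `ξ`.
-/

open Module LieAlgebra

namespace SemidirectMetrized

variable {K D : Type*} [Field K] [LieRing D] [LieAlgebra K D]

def dualBracket (Bs : Dual K D →ₗ[K] D) (μ₁ μ₂ : Dual K D) : Dual K D :=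
  -(μ₂ ∘ₗ ad K D (Bs μ₁))

def bracket (Bs : Dual K D →ₗ[K] D) (x y : D × Dual K D) : D × Dual K D :=
  (⁅x.1, y.1⁆, -(y.2 ∘ₗ ad K D x.1) + (x.2 ∘ₗ ad K D y.1) + dualBracket Bs x.2 y.2)

def form (Bs : Dual K D →ₗ[K] D) (x y : D × Dual K D) : K :=
  x.2 (Bs y.2) + x.2 y.1 + y.2 x.1

variable {Bs : Dual K D →ₗ[K] D}

theorem dualBracket_apply (μ₁ μ₂ : Dual K D) (ξ : D) :
    dualBracket Bs μ₁ μ₂ ξ = μ₂ ⁅ξ, Bs μ₁⁆ := by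
  rw [dualBracket, LinearMap.neg_apply, LinearMap.comp_apply, ad_apply, ← lie_skew, map_neg,
    neg_neg]

theorem apply_lie_sharp_swap (hsymm : ∀ μ ν : Dual K D, μ (Bs ν) = ν (Bs μ))
    (hinv : ∀ (ξ : D) (μ : Dual K D), Bs (μ ∘ₗ ad K D ξ) = -⁅ξ, Bs μ⁆)
    (ξ : D) (μ ν : Dual K D) : μ ⁅ξ, Bs ν⁆ = -ν ⁅ξ, Bs μ⁆ := by
  have h := congrArg μ (hinv ξ ν)
  rw [hsymm, map_neg] at h
  simp only [LinearMap.comp_apply, ad_apply] at h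
  rw [h, neg_neg]

theorem sharp_dualBracket
    (hinv : ∀ (ξ : D) (μ : Dual K D), Bs (μ ∘ₗ ad K D ξ) = -⁅ξ, Bs μ⁆)
    (μ₁ μ₂ : Dual K D) : Bs (dualBracket Bs μ₁ μ₂) = ⁅Bs μ₁, Bs μ₂⁆ := by
  rw [dualBracket, map_neg, hinv, neg_neg]

theorem form_comm (hsymm : ∀ μ ν : Dual K D, μ (Bs ν) = ν (Bs μ))
    (x y : D × Dual K D) : form Bs x y = form Bs y x := by
  rw [form, form, hsymm]
  ring

theorem form_inl_eq_zero_iff (x : D × Dual K D) :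
    (∀ ξ : D, form Bs x (ξ, 0) = 0) ↔ x.2 = 0 := by
  refine ⟨fun h => LinearMap.ext fun ξ => by simpa [form] using h ξ, fun h ξ => ?_⟩
  simp [form, h]

theorem form_nondegenerate (x : D × Dual K D) (hx : ∀ y, form Bs x y = 0) : x = 0 := by
  have hμ : x.2 = 0 := (form_inl_eq_zero_iff x).1 fun ξ => hx (ξ, 0)
  have hξ : x.1 = 0 := (forall_dual_apply_eq_zero_iff K x.1).1 fun ν => by
    simpa [form, hμ] using hx (0, ν)
  exact Prod.ext hξ hμ

theorem form_bracket_add_form_bracket (hsymm : ∀ μ ν : Dual K D, μ (Bs ν) = ν (Bs μ))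
    (hinv : ∀ (ξ : D) (μ : Dual K D), Bs (μ ∘ₗ ad K D ξ) = -⁅ξ, Bs μ⁆)
    (x y z : D × Dual K D) :
    form Bs (bracket Bs x y) z + form Bs y (bracket Bs x z) = 0 := by
  obtain ⟨ξ₁, μ₁⟩ := x
  obtain ⟨ξ₂, μ₂⟩ := y
  obtain ⟨ξ₃, μ₃⟩ := z
  simp only [form, bracket, LinearMap.add_apply, LinearMap.neg_apply, LinearMap.comp_apply,
    ad_apply, map_add, map_neg, dualBracket_apply, sharp_dualBracket hinv, hinv]
  have h₁ := apply_lie_sharp_swap hsymm hinv ξ₂ μ₁ μ₃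
  have h₂ : μ₂ ⁅Bs μ₃, Bs μ₁⁆ = -μ₂ ⁅Bs μ₁, Bs μ₃⁆ := by rw [← lie_skew, map_neg]
  have h₃ : μ₁ ⁅ξ₃, ξ₂⁆ = -μ₁ ⁅ξ₂, ξ₃⁆ := by rw [← lie_skew, map_neg]
  linear_combination h₁ + h₂ + h₃

theorem bracket_inl_inl (ξ₁ ξ₂ : D) :
    bracket Bs (ξ₁, 0) (ξ₂, 0) = (⁅ξ₁, ξ₂⁆, 0) := by
  ext ξ <;> simp [bracket, dualBracket]

theorem bracket_inr_fst (x : D × Dual K D) (μ : Dual K D) :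
    (bracket Bs x (0, μ)).1 = 0 ∧ (bracket Bs (0, μ) x).1 = 0 := by
  simp [bracket]

end SemidirectMetrized

open SemidirectMetrized in
theorem semidirect_metrized_general {K D : Type*} [Field K]
    [LieRing D] [LieAlgebra K D]
    (Bs : Module.Dual K D →ₗ[K] D)
    (hsymm : ∀ μ ν : Module.Dual K D, μ (Bs ν) = ν (Bs μ))
    (hinv : ∀ (ξ : D) (μ : Module.Dual K D),
      Bs (μ ∘ₗ LieAlgebra.ad K D ξ) = -⁅ξ, Bs μ⁆)
    (br : Module.Dual K D → Module.Dual K D → Module.Dual K D)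
    (hbr : ∀ (μ₁ μ₂ : Module.Dual K D) (ξ : D), br μ₁ μ₂ ξ = μ₂ ⁅ξ, Bs μ₁⁆)
    (Br : (D × Module.Dual K D) → (D × Module.Dual K D) → (D × Module.Dual K D))
    (hBr : ∀ x y : D × Module.Dual K D,
      Br x y = (⁅x.1, y.1⁆,
        -(y.2 ∘ₗ LieAlgebra.ad K D x.1) + (x.2 ∘ₗ LieAlgebra.ad K D y.1)
          + br x.2 y.2))
    (hatβ : (D × Module.Dual K D) → (D × Module.Dual K D) → K)
    (hβ : ∀ x y : D × Module.Dual K D,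
      hatβ x y = x.2 (Bs y.2) + x.2 y.1 + y.2 x.1) :
    -- β̂ is symmetric
    (∀ x y, hatβ x y = hatβ y x) ∧
    -- β̂ is non-degenerate
    (∀ x, (∀ y, hatβ x y = 0) → x = 0) ∧
    -- β̂ is invariant
    (∀ x y z, hatβ (Br x y) z + hatβ y (Br x z) = 0) ∧
    -- 𝔡 ⊕ 0 is a Lagrangian Lie subalgebra
    (∀ x : D × Module.Dual K D,
      (∀ ξ : D, hatβ x (ξ, (0 : Module.Dual K D)) = 0) ↔ x.2 = 0) ∧
    (∀ ξ₁ ξ₂ : D,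
      Br (ξ₁, (0 : Module.Dual K D)) (ξ₂, (0 : Module.Dual K D))
        = (⁅ξ₁, ξ₂⁆, (0 : Module.Dual K D))) ∧
    -- 0 ⊕ 𝔡*_β is a Lie algebra ideal
    (∀ (x : D × Module.Dual K D) (μ : Module.Dual K D),
      (Br x ((0 : D), μ)).1 = 0 ∧ (Br ((0 : D), μ) x).1 = 0) := by
  obtain rfl : br = dualBracket Bs :=
    funext₂ fun μ₁ μ₂ => LinearMap.ext fun ξ => by rw [hbr, dualBracket_apply]
  obtain rfl : Br = bracket Bs := funext₂ hBr
  obtain rfl : hatβ = form Bs := funext₂ hβ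
  exact ⟨form_comm hsymm, form_nondegenerate, form_bracket_add_form_bracket hsymm hinv,
    form_inl_eq_zero_iff, bracket_inl_inl, bracket_inr_fst⟩

/-- Let `𝔡` be a finite-dimensional Lie algebra with invariant symmetric 2-tensor `β`
(sharp map `Bs`), and form the semidirect product `𝔡̂ = 𝔡 ⋉ 𝔡*_β` on `D × 𝔡*`,
with bracket `Br (ξ₁,μ₁) (ξ₂,μ₂) = (⁅ξ₁,ξ₂⁆, ad*_{ξ₁}μ₂ − ad*_{ξ₂}μ₁ + [μ₁,μ₂])`,
where `ad*_ξ μ = −μ ∘ ad ξ` and `[μ₁,μ₂] = br μ₁ μ₂` is the bracket of `𝔡*_β`.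
Then `β̂((ξ₁,μ₁),(ξ₂,μ₂)) = β(μ₁,μ₂) + ⟨μ₁,ξ₂⟩ + ⟨μ₂,ξ₁⟩` is symmetric,
non-degenerate and ad-invariant, `𝔡 ⊕ 0` is a Lagrangian Lie subalgebra, and
`0 ⊕ 𝔡*_β` is a Lie algebra ideal. -/
theorem semidirect_metrized {K D : Type*} [Field K]
    [LieRing D] [LieAlgebra K D] [FiniteDimensional K D]
    (Bs : Module.Dual K D →ₗ[K] D)
    (hsymm : ∀ μ ν : Module.Dual K D, μ (Bs ν) = ν (Bs μ))
    (hinv : ∀ (ξ : D) (μ : Module.Dual K D),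
      Bs (μ ∘ₗ LieAlgebra.ad K D ξ) = -⁅ξ, Bs μ⁆)
    (br : Module.Dual K D → Module.Dual K D → Module.Dual K D)
    (hbr : ∀ (μ₁ μ₂ : Module.Dual K D) (ξ : D), br μ₁ μ₂ ξ = μ₂ ⁅ξ, Bs μ₁⁆)
    (Br : (D × Module.Dual K D) → (D × Module.Dual K D) → (D × Module.Dual K D))
    (hBr : ∀ x y : D × Module.Dual K D,
      Br x y = (⁅x.1, y.1⁆,
        -(y.2 ∘ₗ LieAlgebra.ad K D x.1) + (x.2 ∘ₗ LieAlgebra.ad K D y.1)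
          + br x.2 y.2))
    (hatβ : (D × Module.Dual K D) → (D × Module.Dual K D) → K)
    (hβ : ∀ x y : D × Module.Dual K D,
      hatβ x y = x.2 (Bs y.2) + x.2 y.1 + y.2 x.1) :
    -- β̂ is symmetric
    (∀ x y, hatβ x y = hatβ y x) ∧
    -- β̂ is non-degenerate
    (∀ x, (∀ y, hatβ x y = 0) → x = 0) ∧
    -- β̂ is invariant
    (∀ x y z, hatβ (Br x y) z + hatβ y (Br x z) = 0) ∧
    -- 𝔡 ⊕ 0 is a Lagrangian Lie subalgebra
    (∀ x : D × Module.Dual K D,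
      (∀ ξ : D, hatβ x (ξ, (0 : Module.Dual K D)) = 0) ↔ x.2 = 0) ∧
    (∀ ξ₁ ξ₂ : D,
      Br (ξ₁, (0 : Module.Dual K D)) (ξ₂, (0 : Module.Dual K D))
        = (⁅ξ₁, ξ₂⁆, (0 : Module.Dual K D))) ∧
    -- 0 ⊕ 𝔡*_β is a Lie algebra ideal
    (∀ (x : D × Module.Dual K D) (μ : Module.Dual K D),
      (Br x ((0 : D), μ)).1 = 0 ∧ (Br ((0 : D), μ) x).1 = 0) :=
  semidirect_metrized_general Bs hsymm hinv br hbr Br hBr hatβ hβ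
end

section
/- Let 𝔡 be a finite-dimensional Lie algebra with invariant β ∈ S²𝔡, and 𝔡̂ = 𝔡 ⋉ 𝔡*_β with the bilinear form β̂ as above. Then the subspace (𝔡*_β)^⊥ (orthogonal complement of 0 ⊕ 𝔡*_β with respect to β̂) is a Lie algebra ideal of 𝔡̂ complementary to 𝔡 ⊕ 0, and the projection f̂ : 𝔡̂ → 𝔡 with kernel (𝔡*_β)^⊥, given explicitly by f̂(ξ, μ) = ξ + β^♯(μ), is a Lie algebra homomorphism. -/
/-!
The map `f̂(ξ, μ) = ξ + β^♯(μ)` carries the bracket of `𝔡̂` to that of `𝔡`: invariance of `β`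
says `β^♯(μ ∘ ad ξ) = -[ξ, β^♯ μ]`, and the bracket of `𝔡*_β` is `(μ₁, μ₂) ↦ -μ₂ ∘ ad (β^♯ μ₁)`,
so `β^♯` maps it to `[β^♯ μ₁, β^♯ μ₂]`. By symmetry of `β`, `β̂((ξ, μ), (0, ν)) = ν (ξ + β^♯ μ)`,
so `(𝔡*_β)^⊥` is exactly the kernel of `f̂`. Everything else follows: the kernel of a bracket
homomorphism is an ideal, and `f̂` restricts to the identity on `𝔡 ⊕ 0`.
-/

open LieAlgebra

section SemidirectProjection

variable {K D : Type*} [Field K] [LieRing D] [LieAlgebra K D] (Bs : Module.Dual K D →ₗ[K] D)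

theorem sharp_neg_comp_ad_sharp
    (hinv : ∀ (ξ : D) (μ : Module.Dual K D), Bs (μ ∘ₗ ad K D ξ) = -⁅ξ, Bs μ⁆)
    (μ₁ μ₂ : Module.Dual K D) :
    Bs (-(μ₂ ∘ₗ ad K D (Bs μ₁))) = ⁅Bs μ₁, Bs μ₂⁆ := by
  rw [map_neg, hinv, neg_neg]

theorem lie_add_sharp_add_sharp
    (hinv : ∀ (ξ : D) (μ : Module.Dual K D), Bs (μ ∘ₗ ad K D ξ) = -⁅ξ, Bs μ⁆)
    (ξ₁ ξ₂ : D) (μ₁ μ₂ : Module.Dual K D) :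
    ⁅ξ₁ + Bs μ₁, ξ₂ + Bs μ₂⁆ =
      ⁅ξ₁, ξ₂⁆ + Bs (-(μ₂ ∘ₗ ad K D ξ₁) + μ₁ ∘ₗ ad K D ξ₂ + -(μ₂ ∘ₗ ad K D (Bs μ₁))) := by
  rw [map_add, map_add, sharp_neg_comp_ad_sharp Bs hinv, map_neg, hinv, hinv, neg_neg,
    ← lie_skew ξ₂]
  simp only [lie_add, add_lie]
  abel

theorem dual_apply_sharp_add_apply
    (hsymm : ∀ μ ν : Module.Dual K D, μ (Bs ν) = ν (Bs μ)) (ξ : D) (μ ν : Module.Dual K D) :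
    μ (Bs ν) + μ 0 + ν ξ = ν (ξ + Bs μ) := by
  rw [map_zero, add_zero, hsymm, map_add, add_comm]

end SemidirectProjection

theorem dual_perp_ideal_and_projection_general {K D : Type*} [Field K]
    [LieRing D] [LieAlgebra K D]
    (Bs : Module.Dual K D →ₗ[K] D)
    (hsymm : ∀ μ ν : Module.Dual K D, μ (Bs ν) = ν (Bs μ))
    (hinv : ∀ (ξ : D) (μ : Module.Dual K D),
      Bs (μ ∘ₗ LieAlgebra.ad K D ξ) = -⁅ξ, Bs μ⁆)
    (br : Module.Dual K D → Module.Dual K D → Module.Dual K D)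
    (hbr : ∀ (μ₁ μ₂ : Module.Dual K D) (ξ : D), br μ₁ μ₂ ξ = μ₂ ⁅ξ, Bs μ₁⁆)
    (Br : (D × Module.Dual K D) → (D × Module.Dual K D) → (D × Module.Dual K D))
    (hBr : ∀ x y : D × Module.Dual K D,
      Br x y = (⁅x.1, y.1⁆,
        -(y.2 ∘ₗ LieAlgebra.ad K D x.1) + (x.2 ∘ₗ LieAlgebra.ad K D y.1)
          + br x.2 y.2))
    (hatβ : (D × Module.Dual K D) → (D × Module.Dual K D) → K)
    (hβ : ∀ x y : D × Module.Dual K D,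
      hatβ x y = x.2 (Bs y.2) + x.2 y.1 + y.2 x.1)
    (P : (D × Module.Dual K D) → Prop)
    (hP : ∀ x, P x ↔ ∀ ν : Module.Dual K D, hatβ x ((0 : D), ν) = 0)
    (fhat : (D × Module.Dual K D) → D)
    (hfhat : ∀ x, fhat x = x.1 + Bs x.2) :
    -- (𝔡*_β)^⊥ is an ideal
    (∀ x y : D × Module.Dual K D, P y → P (Br x y) ∧ P (Br y x)) ∧
    -- it is complementary to 𝔡 ⊕ 0
    (∀ x : D × Module.Dual K D,
      ∃ (ξ : D) (y : D × Module.Dual K D), P y ∧ x = (ξ, (0 : Module.Dual K D)) + y) ∧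
    (∀ ξ : D, P (ξ, (0 : Module.Dual K D)) → ξ = 0) ∧
    -- f̂ is a Lie algebra homomorphism
    (∀ x y : D × Module.Dual K D, fhat (Br x y) = ⁅fhat x, fhat y⁆) ∧
    -- f̂ is the projection onto 𝔡 with kernel (𝔡*_β)^⊥
    (∀ ξ : D, fhat (ξ, (0 : Module.Dual K D)) = ξ) ∧
    (∀ x : D × Module.Dual K D, fhat x = 0 ↔ P x) := by
  have br_eq : ∀ μ₁ μ₂, br μ₁ μ₂ = -(μ₂ ∘ₗ ad K D (Bs μ₁)) := fun μ₁ μ₂ ↦ by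
    ext ξ
    rw [hbr, LinearMap.neg_apply, LinearMap.comp_apply, ad_apply, ← lie_skew, map_neg]
  have hom : ∀ x y, fhat (Br x y) = ⁅fhat x, fhat y⁆ := fun x y ↦ by
    rw [hfhat, hfhat, hfhat, lie_add_sharp_add_sharp Bs hinv, hBr, br_eq]
  have ker : ∀ x, fhat x = 0 ↔ P x := fun x ↦ by
    rw [hP, hfhat, ← Module.forall_dual_apply_eq_zero_iff K]
    simp only [hβ, dual_apply_sharp_add_apply Bs hsymm]
  refine ⟨fun x y hy ↦ ?_, fun x ↦ ⟨fhat x, (-Bs x.2, x.2), ?_, ?_⟩, fun ξ hξ ↦ ?_, hom,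
    fun ξ ↦ by simp [hfhat], ker⟩
  · rw [← ker] at hy
    simp only [← ker, hom, hy, lie_zero, zero_lie, and_self]
  · simp [← ker, hfhat]
  · ext <;> simp [hfhat]
  · simpa [hfhat] using (ker _).2 hξ

/-- In `𝔡̂ = 𝔡 ⋉ 𝔡*_β` with bilinear form `β̂`, the orthogonal complement
`(𝔡*_β)^⊥` of `0 ⊕ 𝔡*_β` (here `P x := ∀ ν, β̂(x,(0,ν)) = 0`) is a Lie algebra
ideal complementary to `𝔡 ⊕ 0`, and the projection `f̂(ξ,μ) = ξ + β^♯(μ)` along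
it is a Lie algebra homomorphism `𝔡̂ → 𝔡` with kernel `(𝔡*_β)^⊥`. -/
theorem dual_perp_ideal_and_projection {K D : Type*} [Field K]
    [LieRing D] [LieAlgebra K D] [FiniteDimensional K D]
    (Bs : Module.Dual K D →ₗ[K] D)
    (hsymm : ∀ μ ν : Module.Dual K D, μ (Bs ν) = ν (Bs μ))
    (hinv : ∀ (ξ : D) (μ : Module.Dual K D),
      Bs (μ ∘ₗ LieAlgebra.ad K D ξ) = -⁅ξ, Bs μ⁆)
    (br : Module.Dual K D → Module.Dual K D → Module.Dual K D)
    (hbr : ∀ (μ₁ μ₂ : Module.Dual K D) (ξ : D), br μ₁ μ₂ ξ = μ₂ ⁅ξ, Bs μ₁⁆)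
    (Br : (D × Module.Dual K D) → (D × Module.Dual K D) → (D × Module.Dual K D))
    (hBr : ∀ x y : D × Module.Dual K D,
      Br x y = (⁅x.1, y.1⁆,
        -(y.2 ∘ₗ LieAlgebra.ad K D x.1) + (x.2 ∘ₗ LieAlgebra.ad K D y.1)
          + br x.2 y.2))
    (hatβ : (D × Module.Dual K D) → (D × Module.Dual K D) → K)
    (hβ : ∀ x y : D × Module.Dual K D,
      hatβ x y = x.2 (Bs y.2) + x.2 y.1 + y.2 x.1)
    (P : (D × Module.Dual K D) → Prop)
    (hP : ∀ x, P x ↔ ∀ ν : Module.Dual K D, hatβ x ((0 : D), ν) = 0)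
    (fhat : (D × Module.Dual K D) → D)
    (hfhat : ∀ x, fhat x = x.1 + Bs x.2) :
    -- (𝔡*_β)^⊥ is an ideal
    (∀ x y : D × Module.Dual K D, P y → P (Br x y) ∧ P (Br y x)) ∧
    -- it is complementary to 𝔡 ⊕ 0
    (∀ x : D × Module.Dual K D,
      ∃ (ξ : D) (y : D × Module.Dual K D), P y ∧ x = (ξ, (0 : Module.Dual K D)) + y) ∧
    (∀ ξ : D, P (ξ, (0 : Module.Dual K D)) → ξ = 0) ∧
    -- f̂ is a Lie algebra homomorphism
    (∀ x y : D × Module.Dual K D, fhat (Br x y) = ⁅fhat x, fhat y⁆) ∧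
    -- f̂ is the projection onto 𝔡 with kernel (𝔡*_β)^⊥
    (∀ ξ : D, fhat (ξ, (0 : Module.Dual K D)) = ξ) ∧
    (∀ x : D × Module.Dual K D, fhat x = 0 ↔ P x) :=
  dual_perp_ideal_and_projection_general Bs hsymm hinv br hbr Br hBr hatβ hβ P hP fhat hfhat
end

section
/- Let 𝔡 be a finite-dimensional Lie algebra with invariant β ∈ S²𝔡 and 𝔤 ⊆ 𝔡 a β-coisotropic Lie subalgebra. Let 𝔮 = 𝔠/𝔠^⊥ with 𝔠 = 𝔤 ⋉ 𝔡*_β ⊆ 𝔡 ⋉ 𝔡*_β, and let f : 𝔮 → 𝔡 be the map induced by f̂(ξ, μ) = ξ + β^♯(μ) (which descends since 𝔠^⊥ ⊆ ker f̂). Then f is a Lie algebra homomorphism satisfying f(ξ) = ξ for ξ ∈ 𝔤 (under the embedding 𝔤 ↪ 𝔮) and β^♯ = f ∘ f*, where f* : 𝔡* → 𝔮 is the dual map via the identification 𝔮* ≅ 𝔮 given by the induced metric on 𝔮. -/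
/-!
`f̂(ξ, μ) = ξ + β^♯(μ)` is already a Lie algebra homomorphism on all of `𝔡 ⋉ 𝔡*_β`, because
invariance of `β` turns the coadjoint terms of the bracket into `⁅ξ₁, β^♯μ₂⁆ + ⁅β^♯μ₁, ξ₂⁆`
and the `𝔡*_β` bracket into `⁅β^♯μ₁, β^♯μ₂⁆`.
Pairing `x ∈ 𝔠^⊥` with `(0, ν) ∈ 𝔠` gives `ν(f̂ x) = 0` by symmetry of `β`, and for the same
reason `(0, μ)` represents `f*(μ)`, whose image under `f̂` is `β^♯(μ)`.
-/

open Module LieAlgebra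

/-- `x` lies in the β̂-orthogonal `𝔠^⊥` of `𝔠 = 𝔤 ⋉ 𝔡*_β = {y | y.1 ∈ G}`. -/
def InCperp {K D : Type*} [Field K] [AddCommGroup D] [Module K D]
    (G : Submodule K D)
    (hatβ : (D × Module.Dual K D) → (D × Module.Dual K D) → K)
    (x : D × Module.Dual K D) : Prop :=
  ∀ y : D × Module.Dual K D, y.1 ∈ G → hatβ x y = 0

namespace LieAlgebra

variable {K D : Type*} [Field K] [LieRing D] [LieAlgebra K D]

theorem neg_comp_ad_apply (μ : Dual K D) (η ξ : D) :
    (-(μ ∘ₗ ad K D η)) ξ = μ ⁅ξ, η⁆ := by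
  rw [LinearMap.neg_apply, LinearMap.comp_apply, ad_apply, ← map_neg, lie_skew]

variable (Bs : Dual K D →ₗ[K] D)

theorem add_sharp_eq_zero_of_forall_dual (hsymm : ∀ μ ν : Dual K D, μ (Bs ν) = ν (Bs μ))
    {ξ : D} {μ : Dual K D} (h : ∀ ν : Dual K D, μ (Bs ν) + ν ξ = 0) : ξ + Bs μ = 0 :=
  (forall_dual_apply_eq_zero_iff K _).mp fun ν => by
    rw [map_add, ← hsymm, add_comm, h]

theorem lie_add_sharp (hinv : ∀ (ξ : D) (μ : Dual K D), Bs (μ ∘ₗ ad K D ξ) = -⁅ξ, Bs μ⁆)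
    (ξ₁ ξ₂ : D) (μ₁ μ₂ : Dual K D) :
    ⁅ξ₁ + Bs μ₁, ξ₂ + Bs μ₂⁆ = ⁅ξ₁, ξ₂⁆ +
      Bs (-(μ₂ ∘ₗ ad K D ξ₁) + μ₁ ∘ₗ ad K D ξ₂ + -(μ₂ ∘ₗ ad K D (Bs μ₁))) := by
  simp only [map_add, map_neg, hinv, neg_neg, lie_add, add_lie]
  rw [← lie_skew (Bs μ₁) ξ₂]
  abel

end LieAlgebra

theorem reduced_homomorphism_general {K D : Type*} [Field K]
    [LieRing D] [LieAlgebra K D]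
    (Bs : Module.Dual K D →ₗ[K] D)
    (hsymm : ∀ μ ν : Module.Dual K D, μ (Bs ν) = ν (Bs μ))
    (hinv : ∀ (ξ : D) (μ : Module.Dual K D),
      Bs (μ ∘ₗ LieAlgebra.ad K D ξ) = -⁅ξ, Bs μ⁆)
    (br : Module.Dual K D → Module.Dual K D → Module.Dual K D)
    (hbr : ∀ (μ₁ μ₂ : Module.Dual K D) (ξ : D), br μ₁ μ₂ ξ = μ₂ ⁅ξ, Bs μ₁⁆)
    (Br : (D × Module.Dual K D) → (D × Module.Dual K D) → (D × Module.Dual K D))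
    (hBr : ∀ x y : D × Module.Dual K D,
      Br x y = (⁅x.1, y.1⁆,
        -(y.2 ∘ₗ LieAlgebra.ad K D x.1) + (x.2 ∘ₗ LieAlgebra.ad K D y.1)
          + br x.2 y.2))
    (hatβ : (D × Module.Dual K D) → (D × Module.Dual K D) → K)
    (hβ : ∀ x y : D × Module.Dual K D,
      hatβ x y = x.2 (Bs y.2) + x.2 y.1 + y.2 x.1)
    (G : Submodule K D)
    (fhat : (D × Module.Dual K D) → D)
    (hfhat : ∀ x, fhat x = x.1 + Bs x.2) :
    -- f̂ vanishes on 𝔠^⊥, so f descends to the quotient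
    (∀ x : D × Module.Dual K D, InCperp G hatβ x → fhat x = 0) ∧
    -- f is a Lie algebra homomorphism
    (∀ x y : D × Module.Dual K D, fhat (Br x y) = ⁅fhat x, fhat y⁆) ∧
    -- f restricts to the identity on 𝔤 (embedded as ξ ↦ [(ξ,0)])
    (∀ ξ : D, fhat (ξ, (0 : Module.Dual K D)) = ξ) ∧
    -- β^♯ = f ∘ f*
    (∀ μ : Module.Dual K D, ∃ x : D × Module.Dual K D,
      x.1 ∈ G ∧ (∀ y : D × Module.Dual K D, y.1 ∈ G → hatβ x y = μ (fhat y)) ∧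
      fhat x = Bs μ) := by
  refine ⟨fun x hx => ?_, fun x y => ?_, fun ξ => by simp [hfhat],
    fun μ => ⟨(0, μ), G.zero_mem, fun y _ => ?_, by simp [hfhat]⟩⟩
  · rw [hfhat]
    exact add_sharp_eq_zero_of_forall_dual Bs hsymm fun ν => by
      simpa [hβ] using hx (0, ν) G.zero_mem
  · have hbr_eq : br x.2 y.2 = -(y.2 ∘ₗ ad K D (Bs x.2)) :=
      LinearMap.ext fun ξ => by rw [hbr, neg_comp_ad_apply]
    rw [hfhat, hfhat, hfhat, hBr, hbr_eq, lie_add_sharp Bs hinv]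
  · rw [hβ, hfhat, map_add, hsymm μ y.2]
    simpa using add_comm (y.2 (Bs μ)) (μ y.1)

/-- The map `f : 𝔮 = 𝔠/𝔠^⊥ → 𝔡` induced by `f̂(ξ,μ) = ξ + β^♯(μ)` is well defined
(`𝔠^⊥ ⊆ ker f̂`), a Lie algebra homomorphism, restricts to the identity on `𝔤`, and
satisfies `β^♯ = f ∘ f*`, where `f* : 𝔡* → 𝔮` is the dual map via the metric
identification `𝔮* ≅ 𝔮`: for every `μ` there is a representative `x ∈ 𝔠` of `f*(μ)`
(characterized by `β̂(x, y) = μ(f̂(y))` for all `y ∈ 𝔠`) with `f̂(x) = β^♯(μ)`. -/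
theorem reduced_homomorphism {K D : Type*} [Field K]
    [LieRing D] [LieAlgebra K D] [FiniteDimensional K D]
    (Bs : Module.Dual K D →ₗ[K] D)
    (hsymm : ∀ μ ν : Module.Dual K D, μ (Bs ν) = ν (Bs μ))
    (hinv : ∀ (ξ : D) (μ : Module.Dual K D),
      Bs (μ ∘ₗ LieAlgebra.ad K D ξ) = -⁅ξ, Bs μ⁆)
    (br : Module.Dual K D → Module.Dual K D → Module.Dual K D)
    (hbr : ∀ (μ₁ μ₂ : Module.Dual K D) (ξ : D), br μ₁ μ₂ ξ = μ₂ ⁅ξ, Bs μ₁⁆)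
    (Br : (D × Module.Dual K D) → (D × Module.Dual K D) → (D × Module.Dual K D))
    (hBr : ∀ x y : D × Module.Dual K D,
      Br x y = (⁅x.1, y.1⁆,
        -(y.2 ∘ₗ LieAlgebra.ad K D x.1) + (x.2 ∘ₗ LieAlgebra.ad K D y.1)
          + br x.2 y.2))
    (hatβ : (D × Module.Dual K D) → (D × Module.Dual K D) → K)
    (hβ : ∀ x y : D × Module.Dual K D,
      hatβ x y = x.2 (Bs y.2) + x.2 y.1 + y.2 x.1)
    (G : Submodule K D)
    (hG : ∀ x ∈ G, ∀ y ∈ G, ⁅x, y⁆ ∈ G)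
    (hco : ∀ μ ν : Module.Dual K D,
      μ ∈ G.dualAnnihilator → ν ∈ G.dualAnnihilator → μ (Bs ν) = 0)
    (fhat : (D × Module.Dual K D) → D)
    (hfhat : ∀ x, fhat x = x.1 + Bs x.2) :
    -- f̂ vanishes on 𝔠^⊥, so f descends to the quotient
    (∀ x : D × Module.Dual K D, InCperp G hatβ x → fhat x = 0) ∧
    -- f is a Lie algebra homomorphism
    (∀ x y : D × Module.Dual K D, fhat (Br x y) = ⁅fhat x, fhat y⁆) ∧
    -- f restricts to the identity on 𝔤 (embedded as ξ ↦ [(ξ,0)])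
    (∀ ξ : D, fhat (ξ, (0 : Module.Dual K D)) = ξ) ∧
    -- β^♯ = f ∘ f*
    (∀ μ : Module.Dual K D, ∃ x : D × Module.Dual K D,
      x.1 ∈ G ∧ (∀ y : D × Module.Dual K D, y.1 ∈ G → hatβ x y = μ (fhat y)) ∧
      fhat x = Bs μ) :=
  reduced_homomorphism_general Bs hsymm hinv br hbr Br hBr hatβ hβ G fhat hfhat
end

section
/- Let 𝔡 be a finite-dimensional Lie algebra with invariant β ∈ S²𝔡, and suppose β is non-degenerate (so it defines a non-degenerate invariant metric on 𝔡 via β^♯ : 𝔡* ≅ 𝔡) and 𝔤 ⊆ 𝔡 is a Lie subalgebra that is Lagrangian with respect to this metric. Then the reduction (𝔮, 𝔤) of (𝔡 ⋉ 𝔡*_β, 𝔤 ⋉ 𝔡*_β) is canonically isomorphic to (𝔡, 𝔤): the map f : 𝔮 → 𝔡 is an isometric Lie algebra isomorphism restricting to the identity on 𝔤. -/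
/-!
The map `f̂ (ξ, α) = ξ + β^♯ α` is a Lie algebra map `𝔡 ⋉ 𝔡*_β → 𝔡` because `β^♯` is
`𝔡`-equivariant and hence intertwines the bracket of `𝔡*_β` with that of `𝔡`; it is onto since
`β^♯` is. For `x = (ξ, α) ∈ 𝔠` and `μ` with `β^♯ μ = f̂ x` we get `β^♯ (μ - α) = ξ ∈ 𝔤`, so
Lagrangianity puts `μ - α` in `ann 𝔤`, and with the symmetry of `β` this gives `β̂(x, y) = μ (f̂ y)`
for `y ∈ 𝔠`: the map is isometric. Taking `μ = 0` shows that its kernel on `𝔠` lies in `𝔠^⊥`;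
conversely `β̂(x, (0, ν)) = ν (f̂ x)` for all `ν` forces `f̂ x = 0`.
-/

open Module LieAlgebra

section Lagrangian

variable {K D : Type*} [CommRing K] [AddCommGroup D] [Module K D]
  {Bs : Dual K D →ₗ[K] D} {G : Submodule K D}

theorem mem_dualAnnihilator_of_apply_mem (hinj : Function.Injective Bs)
    (hLag : ∀ ζ : D, ζ ∈ G ↔ ∃ μ ∈ G.dualAnnihilator, Bs μ = ζ) {ν : Dual K D}
    (hν : Bs ν ∈ G) : ν ∈ G.dualAnnihilator := by
  obtain ⟨μ, hμ, hμν⟩ := (hLag (Bs ν)).1 hν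
  rwa [hinj hμν] at hμ

theorem pairing_eq_apply_of_lagrangian (hsymm : ∀ μ ν : Dual K D, μ (Bs ν) = ν (Bs μ))
    (hinj : Function.Injective Bs)
    (hLag : ∀ ζ : D, ζ ∈ G ↔ ∃ μ ∈ G.dualAnnihilator, Bs μ = ζ)
    {x y : D × Dual K D} (hx : x.1 ∈ G) (hy : y.1 ∈ G) {μ : Dual K D}
    (hμ : Bs μ = x.1 + Bs x.2) :
    x.2 (Bs y.2) + x.2 y.1 + y.2 x.1 = μ (y.1 + Bs y.2) := by
  have hann : μ - x.2 ∈ G.dualAnnihilator := by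
    refine mem_dualAnnihilator_of_apply_mem hinj hLag ?_
    rwa [map_sub, hμ, add_sub_cancel_right]
  have hμy : μ y.1 = x.2 y.1 := by
    simpa [sub_eq_zero] using (Submodule.mem_dualAnnihilator _).1 hann y.1 hy
  rw [map_add, hμy, hsymm μ, hμ, map_add, hsymm y.2]
  ring

end Lagrangian

section Invariant

variable {K D : Type*} [CommRing K] [LieRing D] [LieAlgebra K D] {Bs : Dual K D →ₗ[K] D}

theorem apply_eq_lie_of_invariant
    (hinv : ∀ (ξ : D) (μ : Dual K D), Bs (μ ∘ₗ ad K D ξ) = -⁅ξ, Bs μ⁆)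
    {μ₁ μ₂ ν : Dual K D} (hν : ∀ ξ, ν ξ = μ₂ ⁅ξ, Bs μ₁⁆) :
    Bs ν = ⁅Bs μ₁, Bs μ₂⁆ := by
  have hν' : ν = -(μ₂ ∘ₗ ad K D (Bs μ₁)) := by
    ext ξ
    rw [LinearMap.neg_apply, LinearMap.comp_apply, ad_apply, ← map_neg, lie_skew, hν]
  rw [hν', map_neg, hinv, neg_neg]

theorem add_apply_semidirect_lie
    (hinv : ∀ (ξ : D) (μ : Dual K D), Bs (μ ∘ₗ ad K D ξ) = -⁅ξ, Bs μ⁆)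
    (x y : D × Dual K D) {ν : Dual K D} (hν : ∀ ξ, ν ξ = y.2 ⁅ξ, Bs x.2⁆) :
    ⁅x.1, y.1⁆ + Bs (-(y.2 ∘ₗ ad K D x.1) + (x.2 ∘ₗ ad K D y.1) + ν) =
      ⁅x.1 + Bs x.2, y.1 + Bs y.2⁆ := by
  rw [map_add, map_add, map_neg, hinv, hinv, apply_eq_lie_of_invariant hinv hν, lie_add,
    add_lie, add_lie, ← lie_skew y.1]
  abel

end Invariant

theorem reduction_exact_case_general {K D : Type*} [Field K]
    [LieRing D] [LieAlgebra K D]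
    (Bs : Module.Dual K D →ₗ[K] D)
    (hsymm : ∀ μ ν : Module.Dual K D, μ (Bs ν) = ν (Bs μ))
    (hinv : ∀ (ξ : D) (μ : Module.Dual K D),
      Bs (μ ∘ₗ LieAlgebra.ad K D ξ) = -⁅ξ, Bs μ⁆)
    (hBsbij : Function.Bijective Bs)
    (br : Module.Dual K D → Module.Dual K D → Module.Dual K D)
    (hbr : ∀ (μ₁ μ₂ : Module.Dual K D) (ξ : D), br μ₁ μ₂ ξ = μ₂ ⁅ξ, Bs μ₁⁆)
    (Br : (D × Module.Dual K D) → (D × Module.Dual K D) → (D × Module.Dual K D))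
    (hBr : ∀ x y : D × Module.Dual K D,
      Br x y = (⁅x.1, y.1⁆,
        -(y.2 ∘ₗ LieAlgebra.ad K D x.1) + (x.2 ∘ₗ LieAlgebra.ad K D y.1)
          + br x.2 y.2))
    (hatβ : (D × Module.Dual K D) → (D × Module.Dual K D) → K)
    (hβ : ∀ x y : D × Module.Dual K D,
      hatβ x y = x.2 (Bs y.2) + x.2 y.1 + y.2 x.1)
    (G : Submodule K D)
    (hGLag : ∀ ζ : D, ζ ∈ G ↔ ∃ μ ∈ G.dualAnnihilator, Bs μ = ζ)
    (fhat : (D × Module.Dual K D) → D)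
    (hfhat : ∀ x, fhat x = x.1 + Bs x.2) :
    -- f is surjective onto 𝔡
    (∀ ζ : D, ∃ x : D × Module.Dual K D, x.1 ∈ G ∧ fhat x = ζ) ∧
    -- f is injective on 𝔮 = 𝔠/𝔠^⊥: its kernel on 𝔠 is exactly 𝔠^⊥
    (∀ x : D × Module.Dual K D, x.1 ∈ G → (fhat x = 0 ↔ InCperp G hatβ x)) ∧
    -- f is isometric: the induced metric on 𝔮 corresponds to β⁻¹ on 𝔡
    (∀ x y : D × Module.Dual K D, x.1 ∈ G → y.1 ∈ G →
      ∀ μ : Module.Dual K D, Bs μ = fhat x → hatβ x y = μ (fhat y)) ∧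
    -- f is a Lie algebra homomorphism
    (∀ x y : D × Module.Dual K D, fhat (Br x y) = ⁅fhat x, fhat y⁆) ∧
    -- f restricts to the identity on 𝔤
    (∀ ξ : D, ξ ∈ G → fhat (ξ, (0 : Module.Dual K D)) = ξ) := by
  have isometric : ∀ x y : D × Dual K D, x.1 ∈ G → y.1 ∈ G →
      ∀ μ : Dual K D, Bs μ = fhat x → hatβ x y = μ (fhat y) := fun x y hx hy μ hμ => by
    rw [hβ, hfhat, pairing_eq_apply_of_lagrangian hsymm hBsbij.1 hGLag hx hy (hμ.trans (hfhat x))]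
  refine ⟨fun ζ => ?_, fun x hx => ⟨fun h y hy => ?_, fun h => ?_⟩, isometric,
    fun x y => ?_, fun ξ _ => by simp [hfhat]⟩
  · obtain ⟨μ, rfl⟩ := hBsbij.2 ζ
    exact ⟨(0, μ), G.zero_mem, by simp [hfhat]⟩
  · simpa using isometric x y hx hy 0 (by rw [h, map_zero])
  · refine (forall_dual_apply_eq_zero_iff K (fhat x)).1 fun ν => ?_
    have h0 := h (0, ν) G.zero_mem
    rwa [hβ, hsymm, map_zero, add_zero, ← map_add, add_comm, ← hfhat] at h0
  · rw [hBr, hfhat, hfhat, hfhat]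
    exact add_apply_semidirect_lie hinv x y (hbr x.2 y.2)

/-- If `β` is non-degenerate (i.e. `β^♯ = Bs` is bijective) and `𝔤` is a Lagrangian
Lie subalgebra (`𝔤 = β^♯(ann 𝔤)`), then the reduction `(𝔮, 𝔤)` of
`(𝔡 ⋉ 𝔡*_β, 𝔤 ⋉ 𝔡*_β)` is canonically isomorphic to `(𝔡, 𝔤)`: the induced map
`f : 𝔮 = 𝔠/𝔠^⊥ → 𝔡`, given on representatives by `f̂(ξ,μ) = ξ + β^♯(μ)`, is an
isometric Lie algebra isomorphism restricting to the identity on `𝔤`.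
All assertions about the quotient are phrased at the level of representatives. -/
theorem reduction_exact_case {K D : Type*} [Field K]
    [LieRing D] [LieAlgebra K D] [FiniteDimensional K D]
    (Bs : Module.Dual K D →ₗ[K] D)
    (hsymm : ∀ μ ν : Module.Dual K D, μ (Bs ν) = ν (Bs μ))
    (hinv : ∀ (ξ : D) (μ : Module.Dual K D),
      Bs (μ ∘ₗ LieAlgebra.ad K D ξ) = -⁅ξ, Bs μ⁆)
    (hBsbij : Function.Bijective Bs)
    (br : Module.Dual K D → Module.Dual K D → Module.Dual K D)
    (hbr : ∀ (μ₁ μ₂ : Module.Dual K D) (ξ : D), br μ₁ μ₂ ξ = μ₂ ⁅ξ, Bs μ₁⁆)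
    (Br : (D × Module.Dual K D) → (D × Module.Dual K D) → (D × Module.Dual K D))
    (hBr : ∀ x y : D × Module.Dual K D,
      Br x y = (⁅x.1, y.1⁆,
        -(y.2 ∘ₗ LieAlgebra.ad K D x.1) + (x.2 ∘ₗ LieAlgebra.ad K D y.1)
          + br x.2 y.2))
    (hatβ : (D × Module.Dual K D) → (D × Module.Dual K D) → K)
    (hβ : ∀ x y : D × Module.Dual K D,
      hatβ x y = x.2 (Bs y.2) + x.2 y.1 + y.2 x.1)
    (G : Submodule K D)
    (hG : ∀ x ∈ G, ∀ y ∈ G, ⁅x, y⁆ ∈ G)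
    (hGLag : ∀ ζ : D, ζ ∈ G ↔ ∃ μ ∈ G.dualAnnihilator, Bs μ = ζ)
    (fhat : (D × Module.Dual K D) → D)
    (hfhat : ∀ x, fhat x = x.1 + Bs x.2) :
    -- f is surjective onto 𝔡
    (∀ ζ : D, ∃ x : D × Module.Dual K D, x.1 ∈ G ∧ fhat x = ζ) ∧
    -- f is injective on 𝔮 = 𝔠/𝔠^⊥: its kernel on 𝔠 is exactly 𝔠^⊥
    (∀ x : D × Module.Dual K D, x.1 ∈ G → (fhat x = 0 ↔ InCperp G hatβ x)) ∧
    -- f is isometric: the induced metric on 𝔮 corresponds to β⁻¹ on 𝔡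
    (∀ x y : D × Module.Dual K D, x.1 ∈ G → y.1 ∈ G →
      ∀ μ : Module.Dual K D, Bs μ = fhat x → hatβ x y = μ (fhat y)) ∧
    -- f is a Lie algebra homomorphism
    (∀ x y : D × Module.Dual K D, fhat (Br x y) = ⁅fhat x, fhat y⁆) ∧
    -- f restricts to the identity on 𝔤
    (∀ ξ : D, ξ ∈ G → fhat (ξ, (0 : Module.Dual K D)) = ξ) :=
  reduction_exact_case_general Bs hsymm hinv hBsbij br hbr Br hBr hatβ hβ G hGLag fhat hfhat
end

section
/- Let 𝔤 and 𝔥 be finite-dimensional Lie algebras, with a linear action • of 𝔥 on 𝔤 and a linear action ρ̇ of 𝔤 on 𝔥, satisfying the matched pair conditions: τ•[ξ₁,ξ₂] = [τ•ξ₁,ξ₂] − [τ•ξ₂,ξ₁] − ρ̇(ξ₁)(τ)•ξ₂ + ρ̇(ξ₂)(τ)•ξ₁ and ρ̇(ξ)([τ₁,τ₂]) = [ρ̇(ξ)(τ₁),τ₂] − [ρ̇(ξ)(τ₂),τ₁] − ρ̇(τ₁•ξ)(τ₂) + ρ̇(τ₂•ξ)(τ₁) for all ξ, ξᵢ ∈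 𝔤 and τ, τᵢ ∈ 𝔥. Then the vector space 𝔡 = 𝔤 ⊕ 𝔥 carries a unique Lie bracket such that 𝔤 and 𝔥 are Lie subalgebras and [ξ, τ] = ρ̇(ξ)(τ) − τ•ξ for ξ ∈ 𝔤, τ ∈ 𝔥. -/
/-!
The bracket on `𝔤 × 𝔥` is forced by bilinearity, antisymmetry and its values on the two
factors. Expanding the Jacobi identity componentwise, the `𝔤`-component reduces to the
Jacobi identity of `𝔤`, `•` being a representation, and the first matched pair condition; the
`𝔥`-component symmetrically to the second.
-/

theorem LinearMap.prod_ext₂ {R M N P : Type*} [CommSemiring R] [AddCommMonoid M]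
    [AddCommMonoid N] [AddCommMonoid P] [Module R M] [Module R N] [Module R P]
    {B B' : M × N →ₗ[R] M × N →ₗ[R] P}
    (h₁₁ : ∀ a b, B (a, 0) (b, 0) = B' (a, 0) (b, 0))
    (h₁₂ : ∀ a q, B (a, 0) (0, q) = B' (a, 0) (0, q))
    (h₂₁ : ∀ p b, B (0, p) (b, 0) = B' (0, p) (b, 0))
    (h₂₂ : ∀ p q, B (0, p) (0, q) = B' (0, p) (0, q)) : B = B' := by
  refine LinearMap.prod_ext (LinearMap.ext fun a => ?_) (LinearMap.ext fun p => ?_) <;>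
    refine LinearMap.prod_ext (LinearMap.ext fun b => ?_) (LinearMap.ext fun q => ?_)
  exacts [h₁₁ a b, h₁₂ a q, h₂₁ p b, h₂₂ p q]

namespace LieAlgebra.MatchedPair

variable {K G H : Type*} [CommRing K] [LieRing G] [LieAlgebra K G] [LieRing H] [LieAlgebra K H]

def bracket (act : H →ₗ[K] G →ₗ[K] G) (rho : G →ₗ[K] H →ₗ[K] H) :
    (G × H) →ₗ[K] (G × H) →ₗ[K] (G × H) :=
  LinearMap.mk₂ K
    (fun x y => (⁅x.1, y.1⁆ + act x.2 y.1 - act y.2 x.1, ⁅x.2, y.2⁆ + rho x.1 y.2 - rho y.1 x.2))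
    (fun _ _ _ => by
      simp only [Prod.fst_add, Prod.snd_add, add_lie, map_add, LinearMap.add_apply, Prod.mk_add_mk]
      congr 1 <;> abel)
    (fun _ _ _ => by
      simp only [Prod.smul_fst, Prod.smul_snd, smul_lie, map_smul, LinearMap.smul_apply,
        Prod.smul_mk, smul_add, smul_sub])
    (fun _ _ _ => by
      simp only [Prod.fst_add, Prod.snd_add, lie_add, map_add, LinearMap.add_apply, Prod.mk_add_mk]
      congr 1 <;> abel)
    (fun _ _ _ => by
      simp only [Prod.smul_fst, Prod.smul_snd, lie_smul, map_smul, LinearMap.smul_apply,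
        Prod.smul_mk, smul_add, smul_sub])

variable (act : H →ₗ[K] G →ₗ[K] G) (rho : G →ₗ[K] H →ₗ[K] H)

@[simp]
theorem bracket_apply (x y : G × H) :
    bracket act rho x y =
      (⁅x.1, y.1⁆ + act x.2 y.1 - act y.2 x.1, ⁅x.2, y.2⁆ + rho x.1 y.2 - rho y.1 x.2) :=
  rfl

theorem bracket_skew (x y : G × H) : bracket act rho x y = -bracket act rho y x := by
  simp only [bracket_apply, Prod.neg_mk, ← lie_skew y.1, ← lie_skew y.2]
  congr 1 <;> abel

variable {act rho}

theorem bracket_jacobi_fst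
    (hact : ∀ (τ₁ τ₂ : H) (ξ : G), act ⁅τ₁, τ₂⁆ ξ = act τ₁ (act τ₂ ξ) - act τ₂ (act τ₁ ξ))
    (hm1 : ∀ (τ : H) (ξ₁ ξ₂ : G), act τ ⁅ξ₁, ξ₂⁆ =
      ⁅act τ ξ₁, ξ₂⁆ - ⁅act τ ξ₂, ξ₁⁆ - act (rho ξ₁ τ) ξ₂ + act (rho ξ₂ τ) ξ₁)
    (x y z : G × H) :
    (bracket act rho x (bracket act rho y z)).1 =
      (bracket act rho (bracket act rho x y) z + bracket act rho y (bracket act rho x z)).1 := by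
  have flip : ∀ (τ : H) (a b : G), ⁅a, act τ b⁆ = -⁅act τ b, a⁆ := fun _ _ _ => (lie_skew _ _).symm
  simp only [bracket_apply, Prod.fst_add, lie_add, lie_sub, add_lie, sub_lie, map_add, map_sub,
    LinearMap.add_apply, LinearMap.sub_apply, hact, hm1, lie_lie, flip]
  abel

theorem bracket_jacobi_snd
    (hrho : ∀ (ξ₁ ξ₂ : G) (τ : H), rho ⁅ξ₁, ξ₂⁆ τ = rho ξ₁ (rho ξ₂ τ) - rho ξ₂ (rho ξ₁ τ))
    (hm2 : ∀ (ξ : G) (τ₁ τ₂ : H), rho ξ ⁅τ₁, τ₂⁆ =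
      ⁅rho ξ τ₁, τ₂⁆ - ⁅rho ξ τ₂, τ₁⁆ - rho (act τ₁ ξ) τ₂ + rho (act τ₂ ξ) τ₁)
    (x y z : G × H) :
    (bracket act rho x (bracket act rho y z)).2 =
      (bracket act rho (bracket act rho x y) z + bracket act rho y (bracket act rho x z)).2 := by
  have flip : ∀ (ξ : G) (p q : H), ⁅p, rho ξ q⁆ = -⁅rho ξ q, p⁆ := fun _ _ _ => (lie_skew _ _).symm
  simp only [bracket_apply, Prod.snd_add, lie_add, lie_sub, add_lie, sub_lie, map_add, map_sub,
    LinearMap.add_apply, LinearMap.sub_apply, hrho, hm2, lie_lie, flip]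
  abel

theorem bracket_jacobi
    (hact : ∀ (τ₁ τ₂ : H) (ξ : G), act ⁅τ₁, τ₂⁆ ξ = act τ₁ (act τ₂ ξ) - act τ₂ (act τ₁ ξ))
    (hrho : ∀ (ξ₁ ξ₂ : G) (τ : H), rho ⁅ξ₁, ξ₂⁆ τ = rho ξ₁ (rho ξ₂ τ) - rho ξ₂ (rho ξ₁ τ))
    (hm1 : ∀ (τ : H) (ξ₁ ξ₂ : G), act τ ⁅ξ₁, ξ₂⁆ =
      ⁅act τ ξ₁, ξ₂⁆ - ⁅act τ ξ₂, ξ₁⁆ - act (rho ξ₁ τ) ξ₂ + act (rho ξ₂ τ) ξ₁)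
    (hm2 : ∀ (ξ : G) (τ₁ τ₂ : H), rho ξ ⁅τ₁, τ₂⁆ =
      ⁅rho ξ τ₁, τ₂⁆ - ⁅rho ξ τ₂, τ₁⁆ - rho (act τ₁ ξ) τ₂ + rho (act τ₂ ξ) τ₁)
    (x y z : G × H) :
    bracket act rho x (bracket act rho y z) =
      bracket act rho (bracket act rho x y) z + bracket act rho y (bracket act rho x z) :=
  Prod.ext (bracket_jacobi_fst hact hm1 x y z) (bracket_jacobi_snd hrho hm2 x y z)

theorem eq_bracket {B : (G × H) →ₗ[K] (G × H) →ₗ[K] (G × H)}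
    (hskew : ∀ x y, B x y = -B y x)
    (hGG : ∀ ξ₁ ξ₂ : G, B (ξ₁, 0) (ξ₂, 0) = (⁅ξ₁, ξ₂⁆, 0))
    (hHH : ∀ τ₁ τ₂ : H, B (0, τ₁) (0, τ₂) = (0, ⁅τ₁, τ₂⁆))
    (hGH : ∀ (ξ : G) (τ : H), B (ξ, 0) (0, τ) = (-act τ ξ, rho ξ τ)) :
    B = bracket act rho := by
  have hHG (τ : H) (ξ : G) : B (0, τ) (ξ, 0) = (act τ ξ, -rho ξ τ) := by
    rw [hskew, hGH, Prod.neg_mk, neg_neg]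
  apply LinearMap.prod_ext₂ <;> intros <;> simp [hGG, hHH, hGH, hHG]

end LieAlgebra.MatchedPair

open LieAlgebra.MatchedPair in
/-- A matched pair of Lie algebras `(𝔤, 𝔥)`: a representation `act` of `𝔥` on `𝔤`
and a representation `rho` of `𝔤` on `𝔥` satisfying the two compatibility
conditions.  Then `𝔡 = 𝔤 ⊕ 𝔥` carries a unique Lie bracket (a bilinear map which
is antisymmetric and satisfies the Jacobi identity) such that `𝔤` and `𝔥` are Lie
subalgebras and `[ξ, τ] = ρ̇(ξ)(τ) − τ•ξ` for `ξ ∈ 𝔤`, `τ ∈ 𝔥`. -/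
theorem matched_pair_double {K G H : Type*} [Field K]
    [LieRing G] [LieAlgebra K G] [LieRing H] [LieAlgebra K H]
    (act : H →ₗ[K] G →ₗ[K] G)
    (hact : ∀ (τ₁ τ₂ : H) (ξ : G),
      act ⁅τ₁, τ₂⁆ ξ = act τ₁ (act τ₂ ξ) - act τ₂ (act τ₁ ξ))
    (rho : G →ₗ[K] H →ₗ[K] H)
    (hrho : ∀ (ξ₁ ξ₂ : G) (τ : H),
      rho ⁅ξ₁, ξ₂⁆ τ = rho ξ₁ (rho ξ₂ τ) - rho ξ₂ (rho ξ₁ τ))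
    (hm1 : ∀ (τ : H) (ξ₁ ξ₂ : G),
      act τ ⁅ξ₁, ξ₂⁆ = ⁅act τ ξ₁, ξ₂⁆ - ⁅act τ ξ₂, ξ₁⁆
        - act (rho ξ₁ τ) ξ₂ + act (rho ξ₂ τ) ξ₁)
    (hm2 : ∀ (ξ : G) (τ₁ τ₂ : H),
      rho ξ ⁅τ₁, τ₂⁆ = ⁅rho ξ τ₁, τ₂⁆ - ⁅rho ξ τ₂, τ₁⁆
        - rho (act τ₁ ξ) τ₂ + rho (act τ₂ ξ) τ₁) :
    ∃! Br : (G × H) →ₗ[K] (G × H) →ₗ[K] (G × H),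
      (∀ x y : G × H, Br x y = -Br y x) ∧
      (∀ x y z : G × H, Br x (Br y z) = Br (Br x y) z + Br y (Br x z)) ∧
      (∀ ξ₁ ξ₂ : G, Br (ξ₁, (0 : H)) (ξ₂, (0 : H)) = (⁅ξ₁, ξ₂⁆, (0 : H))) ∧
      (∀ τ₁ τ₂ : H, Br ((0 : G), τ₁) ((0 : G), τ₂) = ((0 : G), ⁅τ₁, τ₂⁆)) ∧
      (∀ (ξ : G) (τ : H), Br (ξ, (0 : H)) ((0 : G), τ) = (-(act τ ξ), rho ξ τ)) := by
  refine ⟨bracket act rho, ⟨bracket_skew act rho, bracket_jacobi hact hrho hm1 hm2, ?_, ?_, ?_⟩,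
    fun B ⟨hskew, _, hGG, hHH, hGH⟩ => eq_bracket hskew hGG hHH hGH⟩ <;> intros <;> simp
end

section
/- Let 𝔡 = 𝔡₁ × 𝔡₀ where (𝔡ᵢ, 𝔤ᵢ, 𝔥ᵢ)_{βᵢ} are Dirac Manin triples, and let 𝔨 ⊆ 𝔡₁ × 𝔡₀ be a (β₁ − β₀)-coisotropic Lie subalgebra with 𝔤₁ = 𝔨 ∘ 𝔤₀ and 𝔥₀ = 𝔥₁ ∘ 𝔨 (compositions of linear relations). Then ker(𝔨) ⊆ 𝔥₀, hence 𝔤₀ ∩ ker(𝔨) = 0; there exist unique linear maps ψ : 𝔤₁ → 𝔤₀ and φ : 𝔥₀ → 𝔥₁ with (ξ₁, ψ(ξ₁)) ∈ 𝔨 for all ξ₁ ∈ 𝔤₁ and (φ(ν₀), ν₀) ∈ 𝔨 for all ν₀ ∈ 𝔥₀; and 𝔨 is the direct sum of the graphs of ψ and φ: 𝔨 = {(ξ₁ + φ(ν₀), ψ(ξ₁) + ν₀) : ξ₁ ∈ 𝔤₁, ν₀ ∈ 𝔥₀}. In particular dim 𝔨 = dim 𝔤₁ + dim(𝔡₀/𝔤₀).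 -/
open Module

/-! The hypotheses `𝔤₁ = 𝔨 ∘ 𝔤₀` and `𝔥₀ = 𝔥₁ ∘ 𝔨` force `ker 𝔨 ⊆ 𝔥₀` and
`{x₁ : (x₁, 0) ∈ 𝔨} ⊆ 𝔤₁`; since `𝔤ᵢ ∩ 𝔥ᵢ = 0`, the relation `𝔨` is single-valued on `𝔤₁`
(with values in `𝔤₀`) and co-single-valued on `𝔥₀` (with values in `𝔥₁`), which gives `ψ` and `φ`.
Splitting the second component of `x ∈ 𝔨` along `𝔡₀ = 𝔤₀ ⊕ 𝔥₀` and subtracting `(φ ν₀, ν₀)`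
gives the decomposition. For the dimension, `x ↦ x.2 mod 𝔤₀` maps `𝔨` onto `𝔡₀ ⧸ 𝔤₀`, and its
kernel `{x ∈ 𝔨 : x.2 ∈ 𝔤₀}` is identified with `𝔤₁` by the first projection. -/

section Ring

variable {K D₀ D₁ : Type*} [Ring K] [AddCommGroup D₀] [Module K D₀]
  [AddCommGroup D₁] [Module K D₁] (k : Submodule K (D₁ × D₀))

theorem existsUnique_snd_mem {A : Submodule K D₀} (hA : ∀ a ∈ A, ((0 : D₁), a) ∈ k → a = 0)
    {x₁ : D₁} (h : ∃ a ∈ A, (x₁, a) ∈ k) : ∃! a, a ∈ A ∧ (x₁, a) ∈ k := by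
  obtain ⟨a, ha, hxa⟩ := h
  refine ⟨a, ⟨ha, hxa⟩, fun b ⟨hb, hxb⟩ => sub_eq_zero.mp (hA _ (A.sub_mem hb ha) ?_)⟩
  simpa using k.sub_mem hxb hxa

theorem existsUnique_fst_mem {B : Submodule K D₁} (hB : ∀ b ∈ B, (b, (0 : D₀)) ∈ k → b = 0)
    {x₀ : D₀} (h : ∃ b ∈ B, (b, x₀) ∈ k) : ∃! b, b ∈ B ∧ (b, x₀) ∈ k := by
  obtain ⟨b, hb, hbx⟩ := h
  refine ⟨b, ⟨hb, hbx⟩, fun c ⟨hc, hcx⟩ => sub_eq_zero.mp (hB _ (B.sub_mem hc hb) ?_)⟩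
  simpa using k.sub_mem hcx hbx

theorem exists_decomposition {G₀ H₀ : Submodule K D₀} {G₁ H₁ : Submodule K D₁}
    (hspan₀ : G₀ ⊔ H₀ = ⊤) (hG : ∀ x₁ x₀, x₀ ∈ G₀ → (x₁, x₀) ∈ k → x₁ ∈ G₁)
    (hH : ∀ ν₀ ∈ H₀, ∃ ν₁ ∈ H₁, (ν₁, ν₀) ∈ k) {x : D₁ × D₀} (hx : x ∈ k) :
    ∃ ξ₁ ∈ G₁, ∃ ξ₀ ∈ G₀, ∃ ν₁ ∈ H₁, ∃ ν₀ ∈ H₀,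
      (ξ₁, ξ₀) ∈ k ∧ (ν₁, ν₀) ∈ k ∧ x = (ξ₁ + ν₁, ξ₀ + ν₀) := by
  obtain ⟨x₁, x₀⟩ := x
  obtain ⟨ξ₀, hξ₀, ν₀, hν₀, rfl⟩ :=
    Submodule.mem_sup.mp (hspan₀ ▸ Submodule.mem_top : x₀ ∈ G₀ ⊔ H₀)
  obtain ⟨ν₁, hν₁, hν⟩ := hH ν₀ hν₀
  have hξ : (x₁ - ν₁, ξ₀) ∈ k := by
    simpa using k.sub_mem hx hν
  exact ⟨x₁ - ν₁, hG _ _ hξ₀ hξ, ξ₀, hξ₀, ν₁, hν₁, ν₀, hν₀, hξ, hν, by simp⟩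

end Ring

section DivisionRing

variable {K D₀ D₁ : Type*} [DivisionRing K] [AddCommGroup D₀] [Module K D₀]
  [AddCommGroup D₁] [Module K D₁] (k : Submodule K (D₁ × D₀)) (G₀ : Submodule K D₀)

abbrev sndModLinearMap : k →ₗ[K] D₀ ⧸ G₀ := G₀.mkQ ∘ₗ LinearMap.snd K D₁ D₀ ∘ₗ k.subtype

theorem sndModLinearMap_surjective {H₀ : Submodule K D₀} (hspan₀ : G₀ ⊔ H₀ = ⊤)
    (hH : ∀ ν₀ ∈ H₀, ∃ ν₁ : D₁, (ν₁, ν₀) ∈ k) : Function.Surjective (sndModLinearMap k G₀) := by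
  intro y
  obtain ⟨y, rfl⟩ := G₀.mkQ_surjective y
  obtain ⟨ξ₀, hξ₀, ν₀, hν₀, rfl⟩ :=
    Submodule.mem_sup.mp (hspan₀ ▸ Submodule.mem_top : y ∈ G₀ ⊔ H₀)
  obtain ⟨ν₁, hν⟩ := hH ν₀ hν₀
  refine ⟨⟨(ν₁, ν₀), hν⟩, (Submodule.Quotient.eq G₀).mpr ?_⟩
  simpa using G₀.neg_mem hξ₀

theorem finrank_ker_sndModLinearMap {G₁ : Submodule K D₁}
    (hG : ∀ x₁ : D₁, x₁ ∈ G₁ ↔ ∃ x₀ ∈ G₀, (x₁, x₀) ∈ k)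
    (hker₀ : ∀ x₀ ∈ G₀, ((0 : D₁), x₀) ∈ k → x₀ = 0) :
    finrank K (LinearMap.ker (sndModLinearMap k G₀)) = finrank K G₁ := by
  let fst : LinearMap.ker (sndModLinearMap k G₀) →ₗ[K] D₁ :=
    LinearMap.fst K D₁ D₀ ∘ₗ k.subtype ∘ₗ (LinearMap.ker (sndModLinearMap k G₀)).subtype
  have hmem (x : k) : x ∈ LinearMap.ker (sndModLinearMap k G₀) ↔ (x : D₁ × D₀).2 ∈ G₀ := by
    simp
  have hinj : Function.Injective fst := by
    rw [injective_iff_map_eq_zero]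
    rintro ⟨⟨⟨x₁, x₀⟩, hx⟩, hx₀⟩ (rfl : x₁ = 0)
    have : x₀ = 0 := hker₀ x₀ ((hmem _).mp hx₀) hx
    simp [this]
  have hrange : LinearMap.range fst = G₁ := by
    ext x₁
    rw [hG]
    constructor
    · rintro ⟨⟨⟨⟨y₁, x₀⟩, hx⟩, hx₀⟩, rfl⟩
      exact ⟨x₀, (hmem _).mp hx₀, hx⟩
    · rintro ⟨x₀, hx₀, hx⟩
      exact ⟨⟨⟨(x₁, x₀), hx⟩, (hmem _).mpr hx₀⟩, rfl⟩
  rw [← hrange, LinearMap.finrank_range_of_inj hinj]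

end DivisionRing

theorem morphism_structure_general {K D₀ D₁ : Type*} [Field K]
    [AddCommGroup D₀] [Module K D₀] [FiniteDimensional K D₀]
    [AddCommGroup D₁] [Module K D₁] [FiniteDimensional K D₁]
    (G₀ H₀ : Submodule K D₀) (G₁ H₁ : Submodule K D₁)
    (hdisj₀ : G₀ ⊓ H₀ = ⊥) (hspan₀ : G₀ ⊔ H₀ = ⊤)
    (hdisj₁ : G₁ ⊓ H₁ = ⊥)
    (k : Submodule K (D₁ × D₀))
    (hG : ∀ x₁ : D₁, x₁ ∈ G₁ ↔ ∃ x₀ ∈ G₀, (x₁, x₀) ∈ k)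
    (hH : ∀ x₀ : D₀, x₀ ∈ H₀ ↔ ∃ x₁ ∈ H₁, (x₁, x₀) ∈ k) :
    -- ker(𝔨) ⊆ 𝔥₀
    (∀ x₀ : D₀, ((0 : D₁), x₀) ∈ k → x₀ ∈ H₀) ∧
    -- 𝔤₀ ∩ ker(𝔨) = 0
    (∀ x₀ ∈ G₀, ((0 : D₁), x₀) ∈ k → x₀ = 0) ∧
    -- existence and uniqueness of ψ
    (∀ ξ₁ ∈ G₁, ∃! ξ₀ : D₀, ξ₀ ∈ G₀ ∧ (ξ₁, ξ₀) ∈ k) ∧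
    -- existence and uniqueness of φ
    (∀ ν₀ ∈ H₀, ∃! ν₁ : D₁, ν₁ ∈ H₁ ∧ (ν₁, ν₀) ∈ k) ∧
    -- 𝔨 is the direct sum of the graphs of ψ and φ
    (∀ x ∈ k, ∃ ξ₁ ∈ G₁, ∃ ξ₀ ∈ G₀, ∃ ν₁ ∈ H₁, ∃ ν₀ ∈ H₀,
      (ξ₁, ξ₀) ∈ k ∧ (ν₁, ν₀) ∈ k ∧ x = (ξ₁ + ν₁, ξ₀ + ν₀)) ∧
    -- the dimension formula
    (finrank K ↥k = finrank K ↥G₁ + finrank K (D₀ ⧸ G₀)) := by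
  have hker : ∀ x₀ : D₀, ((0 : D₁), x₀) ∈ k → x₀ ∈ H₀ := fun x₀ hx =>
    (hH x₀).mpr ⟨0, H₁.zero_mem, hx⟩
  have hker₀ : ∀ x₀ ∈ G₀, ((0 : D₁), x₀) ∈ k → x₀ = 0 := fun x₀ hx₀ hx =>
    Submodule.disjoint_def.mp (disjoint_iff.mpr hdisj₀) x₀ hx₀ (hker x₀ hx)
  have hker₁ : ∀ x₁ ∈ H₁, (x₁, (0 : D₀)) ∈ k → x₁ = 0 := fun x₁ hx₁ hx =>
    Submodule.disjoint_def.mp (disjoint_iff.mpr hdisj₁) x₁ ((hG x₁).mpr ⟨0, G₀.zero_mem, hx⟩) hx₁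
  have hlift : ∀ ν₀ ∈ H₀, ∃ ν₁ ∈ H₁, (ν₁, ν₀) ∈ k := fun ν₀ => (hH ν₀).mp
  refine ⟨hker, hker₀, fun ξ₁ hξ₁ => existsUnique_snd_mem k hker₀ ((hG ξ₁).mp hξ₁),
    fun ν₀ hν₀ => existsUnique_fst_mem k hker₁ (hlift ν₀ hν₀),
    fun x hx => exists_decomposition k hspan₀ (fun x₁ x₀ hx₀ hx => (hG x₁).mpr ⟨x₀, hx₀, hx⟩)
      hlift hx, ?_⟩
  have hsurj := sndModLinearMap_surjective k G₀ hspan₀ fun ν₀ hν₀ =>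
    (hlift ν₀ hν₀).imp fun _ => And.right
  rw [← (sndModLinearMap k G₀).finrank_range_add_finrank_ker, LinearMap.range_eq_top.mpr hsurj,
    finrank_top, finrank_ker_sndModLinearMap k G₀ hG hker₀, add_comm]

/-- Let `𝔡ᵢ = 𝔤ᵢ ⊕ 𝔥ᵢ` be finite-dimensional vector spaces with direct sum
decompositions, and `𝔨 ⊆ 𝔡₁ × 𝔡₀` a subspace with `𝔤₁ = 𝔨 ∘ 𝔤₀` and
`𝔥₀ = 𝔥₁ ∘ 𝔨` (compositions of linear relations).  Then `ker(𝔨) ⊆ 𝔥₀`, hence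
`𝔤₀ ∩ ker(𝔨) = 0`; there are unique maps `ψ : 𝔤₁ → 𝔤₀` and `φ : 𝔥₀ → 𝔥₁` with
`(ξ₁, ψ(ξ₁)) ∈ 𝔨` and `(φ(ν₀), ν₀) ∈ 𝔨`; and `𝔨` is the direct sum of the graphs
of `ψ` and `φ`.  In particular `dim 𝔨 = dim 𝔤₁ + dim(𝔡₀/𝔤₀)`. -/
theorem morphism_structure {K D₀ D₁ : Type*} [Field K]
    [AddCommGroup D₀] [Module K D₀] [FiniteDimensional K D₀]
    [AddCommGroup D₁] [Module K D₁] [FiniteDimensional K D₁]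
    (G₀ H₀ : Submodule K D₀) (G₁ H₁ : Submodule K D₁)
    (hdisj₀ : G₀ ⊓ H₀ = ⊥) (hspan₀ : G₀ ⊔ H₀ = ⊤)
    (hdisj₁ : G₁ ⊓ H₁ = ⊥) (hspan₁ : G₁ ⊔ H₁ = ⊤)
    (k : Submodule K (D₁ × D₀))
    (hG : ∀ x₁ : D₁, x₁ ∈ G₁ ↔ ∃ x₀ ∈ G₀, (x₁, x₀) ∈ k)
    (hH : ∀ x₀ : D₀, x₀ ∈ H₀ ↔ ∃ x₁ ∈ H₁, (x₁, x₀) ∈ k) :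
    -- ker(𝔨) ⊆ 𝔥₀
    (∀ x₀ : D₀, ((0 : D₁), x₀) ∈ k → x₀ ∈ H₀) ∧
    -- 𝔤₀ ∩ ker(𝔨) = 0
    (∀ x₀ ∈ G₀, ((0 : D₁), x₀) ∈ k → x₀ = 0) ∧
    -- existence and uniqueness of ψ
    (∀ ξ₁ ∈ G₁, ∃! ξ₀ : D₀, ξ₀ ∈ G₀ ∧ (ξ₁, ξ₀) ∈ k) ∧
    -- existence and uniqueness of φ
    (∀ ν₀ ∈ H₀, ∃! ν₁ : D₁, ν₁ ∈ H₁ ∧ (ν₁, ν₀) ∈ k) ∧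
    -- 𝔨 is the direct sum of the graphs of ψ and φ
    (∀ x ∈ k, ∃ ξ₁ ∈ G₁, ∃ ξ₀ ∈ G₀, ∃ ν₁ ∈ H₁, ∃ ν₀ ∈ H₀,
      (ξ₁, ξ₀) ∈ k ∧ (ν₁, ν₀) ∈ k ∧ x = (ξ₁ + ν₁, ξ₀ + ν₀)) ∧
    -- the dimension formula
    (finrank K ↥k = finrank K ↥G₁ + finrank K (D₀ ⧸ G₀)) :=
  morphism_structure_general G₀ H₀ G₁ H₁ hdisj₀ hspan₀ hdisj₁ k hG hH
end

section
/- Let 𝔡 be a finite-dimensional Lie algebra with invariant element β ∈ S²𝔡. In the Lie algebra 𝔡 ⋉ 𝔡*_β (with metric β̂), suppose E is a Lagrangian Lie subalgebra that is also a subgroupoid of the groupoid structure on 𝔡 ⋉ 𝔡*_β ⇉ 𝔡 (with source s(ξ,μ) = ξ, target t(ξ,μ) = ξ + β^♯(μ), multiplication (ξ₁,μ₁)∘(ξ₂,μ₂) = (ξ₂, μ₁+μ₂) when ξ₁ = ξ₂ + β^♯(μ₂)). Let 𝔤 = E ∩ (𝔡 ⊕ 0) be its set of units. Then E = 𝔤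 ⋉ ann(𝔤), 𝔤 is a β-coisotropic Lie subalgebra of 𝔡; and conversely for every β-coisotropic Lie subalgebra 𝔤 ⊆ 𝔡, the subspace 𝔤 ⊕ ann(𝔤) is a Lagrangian Lie subalgebra of 𝔡 ⋉ 𝔡*_β which is a wide subgroupoid over 𝔤. -/
/-!
Pairing a unit `(ξ, 0)` with an element `x` of the Lagrangian `E` gives `x.2 ξ = 0`, so the second
components of `E` annihilate the units `𝔤`. Conversely, if `x.1 ∈ 𝔤` and `x.2 ∈ ann 𝔤`, then `x`
pairs to zero with every `y ∈ E`, because source and target `y.1`, `y.1 + β^♯ y.2` of `y` are units;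
Lagrangianity then gives `x ∈ E`. Hence `E = 𝔤 ⊕ ann 𝔤`, and pairing `(0, μ)` with `(0, ν)` is
β-coisotropy. For the converse, coisotropy means `β^♯ (ann 𝔤) ⊆ 𝔤` (as `ann (ann 𝔤) = 𝔤`), which
makes `𝔤 ⊕ ann 𝔤` closed under the bracket and under source and target.
-/

open Module LieAlgebra

namespace ManinPair

section Linear

variable {K V : Type*} [Field K] [AddCommGroup V] [Module K V]

/-- `β̂`, with `Bs = β^♯`. -/
def metric (Bs : Dual K V →ₗ[K] V) (x y : V × Dual K V) : K :=
  x.2 (Bs y.2) + x.2 y.1 + y.2 x.1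

def IsLagrangian (Bs : Dual K V →ₗ[K] V) (E : Submodule K (V × Dual K V)) : Prop :=
  ∀ x, x ∈ E ↔ ∀ y ∈ E, metric Bs x y = 0

def IsCoisotropic (Bs : Dual K V →ₗ[K] V) (G : Submodule K V) : Prop :=
  ∀ μ ν : Dual K V, μ ∈ G.dualAnnihilator → ν ∈ G.dualAnnihilator → μ (Bs ν) = 0

variable {Bs : Dual K V →ₗ[K] V}

theorem IsCoisotropic.apply_mem {G : Submodule K V} (h : IsCoisotropic Bs G)
    {μ : Dual K V} (hμ : μ ∈ G.dualAnnihilator) : Bs μ ∈ G :=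
  (Subspace.forall_mem_dualAnnihilator_apply_eq_zero_iff G _).1 fun ν hν => h ν μ hν hμ

theorem IsCoisotropic.isLagrangian_prod {G : Submodule K V} (h : IsCoisotropic Bs G) :
    IsLagrangian Bs (G.prod G.dualAnnihilator) := by
  rintro ⟨ξ, μ⟩
  constructor
  · rintro ⟨hξ, hμ⟩ ⟨η, ν⟩ ⟨hη, hν⟩
    simp only [metric, h μ ν hμ hν, (Submodule.mem_dualAnnihilator μ).1 hμ η hη,
      (Submodule.mem_dualAnnihilator ν).1 hν ξ hξ, add_zero]
  · intro hperp
    have hμ : μ ∈ G.dualAnnihilator := (Submodule.mem_dualAnnihilator μ).2 fun η hη => by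
      simpa [metric] using hperp (η, 0) ⟨hη, zero_mem _⟩
    refine ⟨(Subspace.forall_mem_dualAnnihilator_apply_eq_zero_iff G ξ).1 fun ν hν => ?_, hμ⟩
    simpa [metric, h μ ν hμ hν] using hperp (0, ν) ⟨zero_mem _, hν⟩

def units (E : Submodule K (V × Dual K V)) : Submodule K V :=
  E.comap (LinearMap.inl K V (Dual K V))

theorem IsLagrangian.snd_mem_dualAnnihilator {E : Submodule K (V × Dual K V)}
    (hE : IsLagrangian Bs E) {x : V × Dual K V} (hx : x ∈ E) :
    x.2 ∈ (units E).dualAnnihilator :=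
  (Submodule.mem_dualAnnihilator _).2 fun ξ hξ => by
    simpa [metric] using (hE x).1 hx (ξ, 0) hξ

theorem IsLagrangian.eq_prod_units {E : Submodule K (V × Dual K V)} (hE : IsLagrangian Bs E)
    (hunit : ∀ x ∈ E, (x.1, (0 : Dual K V)) ∈ E ∧ (x.1 + Bs x.2, (0 : Dual K V)) ∈ E) :
    E = (units E).prod (units E).dualAnnihilator := by
  ext x
  refine ⟨fun hx => ⟨(hunit x hx).1, hE.snd_mem_dualAnnihilator hx⟩, ?_⟩
  rintro ⟨hsource, hann⟩
  refine (hE x).2 fun y hy => ?_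
  have hannihilates := (Submodule.mem_dualAnnihilator x.2).1 hann
  have hsource_y : x.2 y.1 = 0 := hannihilates _ (hunit y hy).1
  have htarget_y : x.2 (y.1 + Bs y.2) = 0 := hannihilates _ (hunit y hy).2
  have hy_x : y.2 x.1 = 0 :=
    (Submodule.mem_dualAnnihilator y.2).1 (hE.snd_mem_dualAnnihilator hy) _ hsource
  rw [map_add, hsource_y, zero_add] at htarget_y
  simp only [metric, htarget_y, hsource_y, hy_x, add_zero]

theorem IsLagrangian.isCoisotropic_units {E : Submodule K (V × Dual K V)}
    (hE : IsLagrangian Bs E)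
    (hunit : ∀ x ∈ E, (x.1, (0 : Dual K V)) ∈ E ∧ (x.1 + Bs x.2, (0 : Dual K V)) ∈ E) :
    IsCoisotropic Bs (units E) := by
  intro μ ν hμ hν
  have hprod := hE.eq_prod_units hunit
  have hμE : ((0 : V), μ) ∈ E := hprod ▸ ⟨zero_mem _, hμ⟩
  have hνE : ((0 : V), ν) ∈ E := hprod ▸ ⟨zero_mem _, hν⟩
  simpa [metric] using (hE _).1 hμE _ hνE

end Linear

section Lie

variable {K D : Type*} [Field K] [LieRing D] [LieAlgebra K D]

/-- The bracket of `𝔡 ⋉ 𝔡*_β`: on the dual component, `x` acts by the coadjoint action of its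
target `x.1 + β^♯ x.2`. -/
def bracket (Bs : Dual K D →ₗ[K] D) (x y : D × Dual K D) : D × Dual K D :=
  (⁅x.1, y.1⁆, x.2 ∘ₗ ad K D y.1 - y.2 ∘ₗ ad K D (x.1 + Bs x.2))

variable {Bs : Dual K D →ₗ[K] D}

theorem eq_bracket {br : Dual K D → Dual K D → Dual K D}
    (hbr : ∀ (μ₁ μ₂ : Dual K D) (ξ : D), br μ₁ μ₂ ξ = μ₂ ⁅ξ, Bs μ₁⁆)
    {Br : D × Dual K D → D × Dual K D → D × Dual K D}
    (hBr : ∀ x y : D × Dual K D,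
      Br x y = (⁅x.1, y.1⁆, -(y.2 ∘ₗ ad K D x.1) + (x.2 ∘ₗ ad K D y.1) + br x.2 y.2)) :
    Br = bracket Bs := by
  ext x y : 2
  rw [hBr]
  refine Prod.ext rfl (LinearMap.ext fun ξ => ?_)
  simp only [bracket, LinearMap.add_apply, LinearMap.neg_apply, LinearMap.sub_apply,
    LinearMap.comp_apply, ad_apply, hbr, map_add, ← lie_skew ξ (Bs x.2), map_neg]
  ring

theorem bracket_inl_inl (ξ η : D) :
    bracket Bs (ξ, 0) (η, 0) = (⁅ξ, η⁆, 0) := by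
  simp [bracket]

theorem IsCoisotropic.bracket_mem_prod {G : Submodule K D}
    (hG : ∀ ξ ∈ G, ∀ η ∈ G, ⁅ξ, η⁆ ∈ G) (h : IsCoisotropic Bs G) {x y : D × Dual K D}
    (hx : x ∈ G.prod G.dualAnnihilator) (hy : y ∈ G.prod G.dualAnnihilator) :
    bracket Bs x y ∈ G.prod G.dualAnnihilator := by
  obtain ⟨hx₁, hx₂⟩ := hx
  obtain ⟨hy₁, hy₂⟩ := hy
  have htarget : x.1 + Bs x.2 ∈ G := add_mem hx₁ (h.apply_mem hx₂)
  refine ⟨hG _ hx₁ _ hy₁, (Submodule.mem_dualAnnihilator _).2 fun η hη => ?_⟩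
  simp only [bracket, LinearMap.sub_apply, LinearMap.comp_apply, ad_apply,
    (Submodule.mem_dualAnnihilator x.2).1 hx₂ _ (hG _ hy₁ _ hη),
    (Submodule.mem_dualAnnihilator y.2).1 hy₂ _ (hG _ htarget _ hη), sub_zero]

end Lie

end ManinPair

open ManinPair in
theorem multiplicative_manin_pairs_over_point_general {K D : Type*} [Field K]
    [LieRing D] [LieAlgebra K D]
    (Bs : Module.Dual K D →ₗ[K] D)
    (br : Module.Dual K D → Module.Dual K D → Module.Dual K D)
    (hbr : ∀ (μ₁ μ₂ : Module.Dual K D) (ξ : D), br μ₁ μ₂ ξ = μ₂ ⁅ξ, Bs μ₁⁆)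
    (Br : (D × Module.Dual K D) → (D × Module.Dual K D) → (D × Module.Dual K D))
    (hBr : ∀ x y : D × Module.Dual K D,
      Br x y = (⁅x.1, y.1⁆,
        -(y.2 ∘ₗ LieAlgebra.ad K D x.1) + (x.2 ∘ₗ LieAlgebra.ad K D y.1)
          + br x.2 y.2))
    (hatβ : (D × Module.Dual K D) → (D × Module.Dual K D) → K)
    (hβ : ∀ x y : D × Module.Dual K D,
      hatβ x y = x.2 (Bs y.2) + x.2 y.1 + y.2 x.1)
    (E : Submodule K (D × Module.Dual K D))
    -- E is Lagrangian for β̂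
    (hELag : ∀ x, x ∈ E ↔ ∀ y ∈ E, hatβ x y = 0)
    -- E is a Lie subalgebra
    (hEsub : ∀ x ∈ E, ∀ y ∈ E, Br x y ∈ E)
    -- E is a subgroupoid: it contains the units of its elements ...
    (hEunit : ∀ x ∈ E, (x.1, (0 : Module.Dual K D)) ∈ E ∧
      (x.1 + Bs x.2, (0 : Module.Dual K D)) ∈ E) :
    -- E = 𝔤 ⋉ ann(𝔤), where 𝔤 = {ξ | (ξ, 0) ∈ E} is the set of units of E
    (∀ x : D × Module.Dual K D, x ∈ E ↔
      ((x.1, (0 : Module.Dual K D)) ∈ E ∧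
        ∀ ξ : D, (ξ, (0 : Module.Dual K D)) ∈ E → x.2 ξ = 0)) ∧
    -- 𝔤 is a Lie subalgebra of 𝔡
    (∀ ξ η : D, (ξ, (0 : Module.Dual K D)) ∈ E →
      (η, (0 : Module.Dual K D)) ∈ E → (⁅ξ, η⁆, (0 : Module.Dual K D)) ∈ E) ∧
    -- 𝔤 is β-coisotropic
    (∀ μ ν : Module.Dual K D,
      (∀ ξ : D, (ξ, (0 : Module.Dual K D)) ∈ E → μ ξ = 0) →
      (∀ ξ : D, (ξ, (0 : Module.Dual K D)) ∈ E → ν ξ = 0) →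
      μ (Bs ν) = 0) ∧
    -- converse: every β-coisotropic Lie subalgebra 𝔤' gives a Lagrangian Lie
    -- subalgebra E' = 𝔤' ⊕ ann(𝔤') which is a wide subgroupoid over 𝔤'
    (∀ G' : Submodule K D,
      (∀ ξ ∈ G', ∀ η ∈ G', ⁅ξ, η⁆ ∈ G') →
      (∀ μ ν : Module.Dual K D, μ ∈ G'.dualAnnihilator →
        ν ∈ G'.dualAnnihilator → μ (Bs ν) = 0) →
      -- E' is Lagrangian
      ((∀ x : D × Module.Dual K D,
        (x.1 ∈ G' ∧ x.2 ∈ G'.dualAnnihilator) ↔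
          (∀ y : D × Module.Dual K D,
            y.1 ∈ G' → y.2 ∈ G'.dualAnnihilator → hatβ x y = 0)) ∧
      -- E' is a Lie subalgebra
      (∀ x y : D × Module.Dual K D, x.1 ∈ G' → x.2 ∈ G'.dualAnnihilator →
        y.1 ∈ G' → y.2 ∈ G'.dualAnnihilator →
        (Br x y).1 ∈ G' ∧ (Br x y).2 ∈ G'.dualAnnihilator) ∧
      -- E' is a wide subgroupoid: it contains all units over 𝔤', source and
      -- target of its elements lie in 𝔤', and it is closed under multiplication
      (∀ ξ ∈ G', (0 : Module.Dual K D) ∈ G'.dualAnnihilator) ∧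
      (∀ x : D × Module.Dual K D, x.1 ∈ G' → x.2 ∈ G'.dualAnnihilator →
        x.1 + Bs x.2 ∈ G') ∧
      (∀ x y : D × Module.Dual K D, x.1 ∈ G' → x.2 ∈ G'.dualAnnihilator →
        y.1 ∈ G' → y.2 ∈ G'.dualAnnihilator → x.1 = y.1 + Bs y.2 →
        (y.1 ∈ G' ∧ x.2 + y.2 ∈ G'.dualAnnihilator)))) := by
  obtain rfl : hatβ = metric Bs := funext₂ hβ
  obtain rfl : Br = bracket Bs := eq_bracket hbr hBr
  have hE : IsLagrangian Bs E := hELag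
  have hprod := hE.eq_prod_units hEunit
  refine ⟨fun x => ?_, fun ξ η hξ hη => ?_, fun μ ν hμ hν => ?_, fun G hG hcoiso => ?_⟩
  · exact (SetLike.ext_iff.1 hprod x).trans (and_congr Iff.rfl (Submodule.mem_dualAnnihilator _))
  · simpa [bracket_inl_inl] using hEsub _ hξ _ hη
  · exact hE.isCoisotropic_units hEunit μ ν ((Submodule.mem_dualAnnihilator μ).2 hμ)
      ((Submodule.mem_dualAnnihilator ν).2 hν)
  · have hco : IsCoisotropic Bs G := hcoiso
    refine ⟨fun x => (hco.isLagrangian_prod x).trans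
        ⟨fun h y hy₁ hy₂ => h y ⟨hy₁, hy₂⟩, fun h y hy => h y hy.1 hy.2⟩,
      fun x y hx₁ hx₂ hy₁ hy₂ => hco.bracket_mem_prod hG ⟨hx₁, hx₂⟩ ⟨hy₁, hy₂⟩,
      fun _ _ => zero_mem _, fun x hx₁ hx₂ => add_mem hx₁ (hco.apply_mem hx₂),
      fun x y _ hx₂ hy₁ hy₂ _ => ⟨hy₁, add_mem hx₂ hy₂⟩⟩

/-- Classification of multiplicative Manin pairs over a point.  In
`𝔡̂ = 𝔡 ⋉ 𝔡*_β` (with metric `β̂` and bracket `Br`), carrying the groupoid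
structure over `𝔡` with source `s(ξ,μ) = ξ`, target `t(ξ,μ) = ξ + β^♯(μ)` and
multiplication `(ξ₁,μ₁)∘(ξ₂,μ₂) = (ξ₂, μ₁+μ₂)` when `ξ₁ = ξ₂ + β^♯(μ₂)`:
if `E` is a Lagrangian Lie subalgebra which is also a subgroupoid, and
`𝔤 = E ∩ (𝔡 ⊕ 0)`, then `E = 𝔤 ⋉ ann(𝔤)` and `𝔤` is a β-coisotropic Lie
subalgebra of `𝔡`.  Conversely, for any β-coisotropic Lie subalgebra
`𝔤' ⊆ 𝔡`, the subspace `𝔤' ⊕ ann(𝔤')` is a Lagrangian Lie subalgebra of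
`𝔡 ⋉ 𝔡*_β` which is a wide subgroupoid over `𝔤'`. -/
theorem multiplicative_manin_pairs_over_point {K D : Type*} [Field K]
    [LieRing D] [LieAlgebra K D] [FiniteDimensional K D]
    (Bs : Module.Dual K D →ₗ[K] D)
    (hsymm : ∀ μ ν : Module.Dual K D, μ (Bs ν) = ν (Bs μ))
    (hinv : ∀ (ξ : D) (μ : Module.Dual K D),
      Bs (μ ∘ₗ LieAlgebra.ad K D ξ) = -⁅ξ, Bs μ⁆)
    (br : Module.Dual K D → Module.Dual K D → Module.Dual K D)
    (hbr : ∀ (μ₁ μ₂ : Module.Dual K D) (ξ : D), br μ₁ μ₂ ξ = μ₂ ⁅ξ, Bs μ₁⁆)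
    (Br : (D × Module.Dual K D) → (D × Module.Dual K D) → (D × Module.Dual K D))
    (hBr : ∀ x y : D × Module.Dual K D,
      Br x y = (⁅x.1, y.1⁆,
        -(y.2 ∘ₗ LieAlgebra.ad K D x.1) + (x.2 ∘ₗ LieAlgebra.ad K D y.1)
          + br x.2 y.2))
    (hatβ : (D × Module.Dual K D) → (D × Module.Dual K D) → K)
    (hβ : ∀ x y : D × Module.Dual K D,
      hatβ x y = x.2 (Bs y.2) + x.2 y.1 + y.2 x.1)
    (E : Submodule K (D × Module.Dual K D))
    -- E is Lagrangian for β̂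
    (hELag : ∀ x, x ∈ E ↔ ∀ y ∈ E, hatβ x y = 0)
    -- E is a Lie subalgebra
    (hEsub : ∀ x ∈ E, ∀ y ∈ E, Br x y ∈ E)
    -- E is a subgroupoid: it contains the units of its elements ...
    (hEunit : ∀ x ∈ E, (x.1, (0 : Module.Dual K D)) ∈ E ∧
      (x.1 + Bs x.2, (0 : Module.Dual K D)) ∈ E)
    -- ... and is closed under the groupoid multiplication
    (hEmul : ∀ x ∈ E, ∀ y ∈ E, x.1 = y.1 + Bs y.2 →
      ((y.1, x.2 + y.2) : D × Module.Dual K D) ∈ E) :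
    -- E = 𝔤 ⋉ ann(𝔤), where 𝔤 = {ξ | (ξ, 0) ∈ E} is the set of units of E
    (∀ x : D × Module.Dual K D, x ∈ E ↔
      ((x.1, (0 : Module.Dual K D)) ∈ E ∧
        ∀ ξ : D, (ξ, (0 : Module.Dual K D)) ∈ E → x.2 ξ = 0)) ∧
    -- 𝔤 is a Lie subalgebra of 𝔡
    (∀ ξ η : D, (ξ, (0 : Module.Dual K D)) ∈ E →
      (η, (0 : Module.Dual K D)) ∈ E → (⁅ξ, η⁆, (0 : Module.Dual K D)) ∈ E) ∧
    -- 𝔤 is β-coisotropic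
    (∀ μ ν : Module.Dual K D,
      (∀ ξ : D, (ξ, (0 : Module.Dual K D)) ∈ E → μ ξ = 0) →
      (∀ ξ : D, (ξ, (0 : Module.Dual K D)) ∈ E → ν ξ = 0) →
      μ (Bs ν) = 0) ∧
    -- converse: every β-coisotropic Lie subalgebra 𝔤' gives a Lagrangian Lie
    -- subalgebra E' = 𝔤' ⊕ ann(𝔤') which is a wide subgroupoid over 𝔤'
    (∀ G' : Submodule K D,
      (∀ ξ ∈ G', ∀ η ∈ G', ⁅ξ, η⁆ ∈ G') →
      (∀ μ ν : Module.Dual K D, μ ∈ G'.dualAnnihilator →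
        ν ∈ G'.dualAnnihilator → μ (Bs ν) = 0) →
      -- E' is Lagrangian
      ((∀ x : D × Module.Dual K D,
        (x.1 ∈ G' ∧ x.2 ∈ G'.dualAnnihilator) ↔
          (∀ y : D × Module.Dual K D,
            y.1 ∈ G' → y.2 ∈ G'.dualAnnihilator → hatβ x y = 0)) ∧
      -- E' is a Lie subalgebra
      (∀ x y : D × Module.Dual K D, x.1 ∈ G' → x.2 ∈ G'.dualAnnihilator →
        y.1 ∈ G' → y.2 ∈ G'.dualAnnihilator →
        (Br x y).1 ∈ G' ∧ (Br x y).2 ∈ G'.dualAnnihilator) ∧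
      -- E' is a wide subgroupoid: it contains all units over 𝔤', source and
      -- target of its elements lie in 𝔤', and it is closed under multiplication
      (∀ ξ ∈ G', (0 : Module.Dual K D) ∈ G'.dualAnnihilator) ∧
      (∀ x : D × Module.Dual K D, x.1 ∈ G' → x.2 ∈ G'.dualAnnihilator →
        x.1 + Bs x.2 ∈ G') ∧
      (∀ x y : D × Module.Dual K D, x.1 ∈ G' → x.2 ∈ G'.dualAnnihilator →
        y.1 ∈ G' → y.2 ∈ G'.dualAnnihilator → x.1 = y.1 + Bs y.2 →
        (y.1 ∈ G' ∧ x.2 + y.2 ∈ G'.dualAnnihilator)))) :=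
  multiplicative_manin_pairs_over_point_general Bs br hbr Br hBr hatβ hβ E hELag hEsub hEunit
end

section
/- Let G be a Lie group whose Lie algebra 𝔤 carries an invariant metric B, with Cartan 3-form η = (1/12) B(θ^L, [θ^L, θ^L]) ∈ Ω³(G). Then the map κ : G × (𝔤̄ ⊕ 𝔤) → TG ⊕ T*G given by κ(ζ₁, ζ₂) = (ζ₂^L − ζ₁^R, ½B(θ^L, ζ₂) + ½B(θ^R, ζ₁)) is an isomorphism of vector bundles which is isometric: for the split-signature metric ⟨v + α, v' + α'⟩ = α(v') + α'(v) on TG ⊕ T*G and the metric (−B) ⊕ B on 𝔤̄ ⊕ 𝔤, one has ⟨κ(ζ₁,ζ₂), κ(ζ₁',ζ₂')⟩ = −B(ζ₁,ζ₁') + B(ζ₂,ζ₂') at every point of G. -/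
/-!
At a point `g`, invariance of `B` under `Ad_g` turns `B(Ad_{g⁻¹} ζ₁', ζ₂)` into
`B(Ad_g ζ₂, ζ₁')`, so in `⟨κζ, κζ'⟩` the mixed terms cancel and the two halves of each diagonal
term add up to `-B(ζ₁, ζ₁') + B(ζ₂, ζ₂')`. An isometry out of the nondegenerate form
`(-B) ⊕ B` is injective, and both fibres have dimension `2 dim 𝔤`, so `κ` is bijective.
-/

open Module

namespace LinearMap

variable {R M N : Type*} [CommRing R] [AddCommGroup M] [Module R M] [AddCommGroup N] [Module R N]

theorem SeparatingLeft.injective_of_isometry {q : LinearMap.BilinForm R M} (hq : q.SeparatingLeft)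
    {p : LinearMap.BilinForm R N} {f : M →ₗ[R] N} (hf : ∀ x y, p (f x) (f y) = q x y) :
    Function.Injective f := by
  refine (injective_iff_map_eq_zero f).mpr fun x hx ↦ hq x fun y ↦ ?_
  rw [← hf, hx, map_zero, zero_apply]

def splitPairing (R M : Type*) [CommRing R] [AddCommGroup M] [Module R M] :
    LinearMap.BilinForm R (M × Dual R M) :=
  (dualProd R M).compl₁₂ (LinearEquiv.prodComm R M (Dual R M)).toLinearMap
    (LinearEquiv.prodComm R M (Dual R M)).toLinearMap

@[simp]
theorem splitPairing_apply (x y : M × Dual R M) : splitPairing R M x y = x.2 y.1 + y.2 x.1 := by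
  simp [splitPairing, add_comm]

def negProd (B : LinearMap.BilinForm R M) : LinearMap.BilinForm R (M × M) :=
  -B.compl₁₂ (fst R M M) (fst R M M) + B.compl₁₂ (snd R M M) (snd R M M)

@[simp]
theorem negProd_apply (B : LinearMap.BilinForm R M) (x y : M × M) :
    negProd B x y = -B x.1 y.1 + B x.2 y.2 := by
  simp [negProd]

theorem SeparatingLeft.negProd {B : LinearMap.BilinForm R M} (hB : B.SeparatingLeft) :
    (negProd B).SeparatingLeft := by
  intro x hx
  have h₁ : x.1 = 0 := hB _ fun y ↦ by simpa using hx (y, 0)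
  have h₂ : x.2 = 0 := hB _ fun y ↦ by simpa using hx (0, y)
  exact Prod.ext h₁ h₂

end LinearMap

open LinearMap

section Fiber

variable {K V : Type*} [Field K] [AddCommGroup V] [Module K V] {B : LinearMap.BilinForm K V}
  {e : V ≃ₗ[K] V} {f : V × V →ₗ[K] V × Dual K V}

theorem splitPairing_apply_eq_negProd [CharZero K] (hB : B.IsSymm) (he : B.IsOrthogonal e)
    (hf₁ : ∀ ζ, (f ζ).1 = e ζ.2 - ζ.1)
    (hf₂ : ∀ ζ w, (f ζ).2 w = (2⁻¹ : K) * B (e.symm w) ζ.2 + (2⁻¹ : K) * B w ζ.1)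
    (ζ ζ' : V × V) : splitPairing K V (f ζ) (f ζ') = negProd B ζ ζ' := by
  have hadj : IsAdjointPair B B e e.symm :=
    (LinearEquiv.isAdjointPair_symm_iff (f := e.toEquiv)).mpr he
  simp only [splitPairing_apply, negProd_apply, hf₁, hf₂, map_sub, LinearEquiv.symm_apply_apply,
    LinearMap.sub_apply]
  rw [hadj ζ.2 ζ'.1, hadj ζ'.2 ζ.1, hB.eq ζ.2 (e.symm ζ'.1), hB.eq ζ'.2 (e.symm ζ.1),
    hB.eq ζ'.2 ζ.2, hB.eq ζ'.1 ζ.1]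
  ring

theorem bijective_of_splitPairing_apply_eq_negProd [FiniteDimensional K V]
    (hB : B.SeparatingLeft) (hf : ∀ ζ ζ', splitPairing K V (f ζ) (f ζ') = negProd B ζ ζ') :
    Function.Bijective f := by
  have hinj := hB.negProd.injective_of_isometry hf
  have hdim : finrank K (V × V) = finrank K (V × Dual K V) := by
    simp [finrank_prod, Subspace.dual_finrank_eq]
  exact ⟨hinj, (injective_iff_surjective_of_finrank_eq_finrank hdim).mp hinj⟩

end Fiber

/-- `kap g` is `κ` at `g` in the right trivializations `T_gG ≅ 𝔤`, `T*_gG ≅ 𝔤*`. -/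
theorem cartan_courant_trivialization {V : Type*} [AddCommGroup V] [Module ℝ V]
    [FiniteDimensional ℝ V]
    (B : V →ₗ[ℝ] V →ₗ[ℝ] ℝ)
    (hBsym : ∀ x y, B x y = B y x)
    (hBnd : ∀ x, (∀ y, B x y = 0) → x = 0)
    {G : Type*} [Group G]
    (Ad : G →* (V ≃ₗ[ℝ] V))
    (hAd : ∀ (g : G) (x y : V), B (Ad g x) (Ad g y) = B x y)
    (kap : G → (V × V) →ₗ[ℝ] (V × Module.Dual ℝ V))
    (hkap₁ : ∀ (g : G) (ζ : V × V), (kap g ζ).1 = Ad g ζ.2 - ζ.1)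
    (hkap₂ : ∀ (g : G) (ζ : V × V) (w : V),
      (kap g ζ).2 w = (2⁻¹ : ℝ) * B (Ad g⁻¹ w) ζ.2 + (2⁻¹ : ℝ) * B w ζ.1) :
    ∀ g : G,
      Function.Bijective (kap g) ∧
      ∀ ζ ζ' : V × V,
        (kap g ζ).2 ((kap g ζ').1) + (kap g ζ').2 ((kap g ζ).1) =
          -(B ζ.1 ζ'.1) + B ζ.2 ζ'.2 := by
  intro g
  have hkap₂_symm :
      ∀ ζ w, (kap g ζ).2 w = (2⁻¹ : ℝ) * B ((Ad g).symm w) ζ.2 + (2⁻¹ : ℝ) * B w ζ.1 := by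
    simpa only [map_inv, LinearEquiv.coe_inv] using hkap₂ g
  have hisom := splitPairing_apply_eq_negProd ⟨hBsym⟩ (hAd g) (hkap₁ g) hkap₂_symm
  refine ⟨bijective_of_splitPairing_apply_eq_negProd hBnd hisom, fun ζ ζ' ↦ ?_⟩
  simpa using hisom ζ ζ'
end
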